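/- arXiv:2003.01192 — 5 statements merged into one kernel-verified Lean document; each statement's English description precedes it below -/
import Mathlib

section
/- Let $H\in(1/2,1)$, $p+H>0$, and define $C_{p,H}(\tau):=e^{-\tau(p+H)} f_{p,H}(1,e^\tau)/f_{p,H}(1,1)$ for $\tau\ge 0$. Then there is a constant $c=c(p,H)<\infty$ such that $C_{p,H}(\tau)\le c\,\max(\tau e^{-\tau(p+H)}, e^{-\tau(1-H)})$ for all $\tau\ge 0$; in particular $\int_0^\infty C_{p,H}(\tau)\,d\tau<\infty$. -/
open MeasureTheory Real Set
open scoped ENNReal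

/-- `f_{p,H}(a,b) = ∫_0^a ∫_0^b x^p y^p |x-y|^{2H-2} dx dy` as a Lebesgue integral. -/
noncomputable def fPH (p H a b : ℝ) : ℝ≥0∞ :=
  ∫⁻ x in Ioo (0:ℝ) a, ∫⁻ y in Ioo (0:ℝ) b,
    ENNReal.ofReal (x ^ p * y ^ p * |x - y| ^ (2 * H - 2))

/-- `ψ_α(x) = ∫_1^x y^α dy`. -/
noncomputable def psi (α x : ℝ) : ℝ := ∫ y in (1:ℝ)..x, y ^ α

/-!
Split the `y`-range of `f_{p,H}(1, e^τ)` at `y = 2`. For `x < 1` and `y ≥ 2` we have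
`|x - y| ≥ y / 2`, so the part `y ≥ 2` is at most `(1/2)^(2H-2) ψ_{p+2H-2}(e^τ) / (p + 1)`, and
`ψ_α(e^τ)` is at most `τ` when `α ≤ -1` (compare with `y⁻¹`) and at most `e^{τ(α+1)} / (α + 1)`
otherwise. The remaining part `f_{p,H}(1, 2)` is finite: for fixed `x` the inner integral over
`y < x/2`, `x/2 ≤ y ≤ 2x` and `2x < y < 2` is `O(x ^ γ)` for some `γ > -1`, the condition
`p + H > 0` being exactly what makes `x ^ (2p + 2H - 1)` integrable at `0`. As
`1 ≤ e · max(τ, e^{τ(p+2H-1)})`, this gives `f_{p,H}(1, e^τ) ≲ max(τ, e^{τ(p+2H-1)})`; multiplying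
by `e^{-τ(p+H)}` gives the claimed bound, whose right-hand side is integrable on `[0, ∞)`, and
`f_{p,H}(1, 1) > 0` because the kernel is positive off the diagonal.
-/

noncomputable def fKernel (p H x y : ℝ) : ℝ := x ^ p * y ^ p * |x - y| ^ (2 * H - 2)

lemma fPH_eq_lintegral_fKernel (p H a b : ℝ) :
    fPH p H a b = ∫⁻ x in Ioo 0 a, ∫⁻ y in Ioo 0 b, ENNReal.ofReal (fKernel p H x y) := rfl

lemma fKernel_comm (p H x y : ℝ) : fKernel p H x y = fKernel p H y x := by
  rw [fKernel, fKernel, abs_sub_comm]; ring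

lemma fKernel_pos {p H x y : ℝ} (hx : 0 < x) (hy : 0 < y) (hxy : x ≠ y) :
    0 < fKernel p H x y := by
  have : 0 < |x - y| := abs_pos.2 (sub_ne_zero.2 hxy)
  unfold fKernel; positivity

lemma measurable_lintegral_fKernel (p H : ℝ) (s : Set ℝ) :
    Measurable fun x ↦ ∫⁻ y in s, ENNReal.ofReal (fKernel p H x y) :=
  Measurable.lintegral_prod_right'
    (show Measurable fun z : ℝ × ℝ ↦ ENNReal.ofReal (fKernel p H z.1 z.2) by
      unfold fKernel; fun_prop)

lemma lintegral_ofReal_const_mul {α : Type*} [MeasurableSpace α] {μ : Measure α} {c : ℝ}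
    (hc : 0 ≤ c) (f : α → ℝ) :
    ∫⁻ y, ENNReal.ofReal (c * f y) ∂μ = ENNReal.ofReal c * ∫⁻ y, ENNReal.ofReal (f y) ∂μ := by
  simp_rw [ENNReal.ofReal_mul hc]
  exact lintegral_const_mul' _ _ ENNReal.ofReal_ne_top

lemma setLIntegral_pos_of_pos {α : Type*} [MeasurableSpace α] {μ : Measure α} {f : α → ℝ≥0∞}
    {s : Set α} (hf : Measurable f) (hs : μ s ≠ 0) (h : ∀ x ∈ s, 0 < f x) :
    0 < ∫⁻ x in s, f x ∂μ :=
  (setLIntegral_pos_iff hf).2 <|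
    (pos_iff_ne_zero.2 hs).trans_le (measure_mono fun x hx ↦ ⟨(h x hx).ne', hx⟩)

lemma lintegral_rpow_Ioo_zero {r c : ℝ} (hr : -1 < r) (hc : 0 < c) :
    ∫⁻ x in Ioo 0 c, ENNReal.ofReal (x ^ r) = ENNReal.ofReal (c ^ (r + 1) / (r + 1)) := by
  rw [← ofReal_integral_eq_lintegral_ofReal ((intervalIntegral.integrableOn_Ioo_rpow_iff hc).2 hr)
    ((ae_restrict_mem measurableSet_Ioo).mono fun x hx ↦ rpow_nonneg hx.1.le _),
    ← integral_Ioc_eq_integral_Ioo, ← intervalIntegral.integral_of_le hc.le,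
    integral_rpow (Or.inl hr), zero_rpow (by linarith), sub_zero]

lemma lintegral_rpow_Ioi {r c : ℝ} (hr : r < -1) (hc : 0 < c) :
    ∫⁻ x in Ioi c, ENNReal.ofReal (x ^ r) = ENNReal.ofReal (-c ^ (r + 1) / (r + 1)) := by
  rw [← ofReal_integral_eq_lintegral_ofReal (integrableOn_Ioi_rpow_of_lt hr hc)
    ((ae_restrict_mem measurableSet_Ioi).mono fun x hx ↦ rpow_nonneg (hc.trans hx).le _),
    integral_Ioi_rpow_of_lt hr hc]

lemma lintegral_ofReal_mul_rpow_Ioo_zero_one_lt_top (C : ℝ) {γ : ℝ} (hγ : -1 < γ) :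
    ∫⁻ x in Ioo 0 1, ENNReal.ofReal (C * x ^ γ) < ⊤ :=
  (((intervalIntegral.integrableOn_Ioo_rpow_iff one_pos).2 hγ).const_mul C).lintegral_lt_top

lemma setLIntegral_comp_sub_left (f : ℝ → ℝ≥0∞) (x a b : ℝ) :
    ∫⁻ y in Ioo a b, f (x - y) = ∫⁻ u in Ioo (x - b) (x - a), f u := by
  have h := (Measure.measurePreserving_sub_left volume x).setLIntegral_comp_preimage_emb
    (MeasurableEquiv.subLeft x).measurableEmbedding f (Ioo (x - b) (x - a))
  rwa [preimage_const_sub_Ioo, sub_sub_cancel, sub_sub_cancel] at h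

lemma lintegral_abs_sub_rpow_le {r s : ℝ} (hr : -1 < r) (hs : 0 < s) (x : ℝ) :
    ∫⁻ y in Ioo (x - s) (x + s), ENNReal.ofReal (|x - y| ^ r)
      ≤ 2 * ENNReal.ofReal (s ^ (r + 1) / (r + 1)) := by
  let F : ℝ → ℝ≥0∞ := fun u ↦ ENNReal.ofReal (|u| ^ r)
  have hpos : ∫⁻ u in Ioo 0 s, F u = ENNReal.ofReal (s ^ (r + 1) / (r + 1)) := by
    rw [← lintegral_rpow_Ioo_zero hr hs]
    exact setLIntegral_congr_fun measurableSet_Ioo fun u hu ↦ by simp [F, abs_of_pos hu.1]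
  have hneg : ∫⁻ u in Ioo (-s) 0, F u = ∫⁻ u in Ioo 0 s, F u := by
    simpa [F] using setLIntegral_comp_sub_left F 0 (-s) 0
  calc ∫⁻ y in Ioo (x - s) (x + s), F (x - y)
      = ∫⁻ u in Ioo (-s) s, F u := by
        rw [setLIntegral_comp_sub_left, sub_add_cancel_left, sub_sub_cancel]
    _ ≤ ∫⁻ u in Ioo (-s) 0 ∪ Ico 0 s, F u :=
        lintegral_mono_set fun u hu ↦ (lt_or_ge u 0).imp (⟨hu.1, ·⟩) (⟨·, hu.2⟩)
    _ ≤ (∫⁻ u in Ioo (-s) 0, F u) + ∫⁻ u in Ico 0 s, F u := lintegral_union_le _ _ _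
    _ = 2 * ENNReal.ofReal (s ^ (r + 1) / (r + 1)) := by
        rw [hneg, ← setLIntegral_congr Ioo_ae_eq_Ico, hpos, two_mul]

lemma fKernel_le_of_two_mul_le {p H x y : ℝ} (hH : H ≤ 1) (hx : 0 < x) (hxy : 2 * x ≤ y) :
    fKernel p H x y ≤ (1 / 2) ^ (2 * H - 2) * x ^ p * y ^ (p + 2 * H - 2) := by
  have hy : 0 < y := by linarith
  have hdist : y / 2 ≤ |x - y| := by rw [abs_sub_comm, abs_of_pos (by linarith)]; linarith
  calc fKernel p H x y ≤ x ^ p * y ^ p * (1 / 2 * y) ^ (2 * H - 2) := by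
        unfold fKernel
        exact mul_le_mul_of_nonneg_left
          (rpow_le_rpow_of_nonpos (by positivity) (by linarith) (by linarith)) (by positivity)
    _ = (1 / 2) ^ (2 * H - 2) * x ^ p * y ^ (p + 2 * H - 2) := by
        rw [mul_rpow (by norm_num) hy.le, show p + 2 * H - 2 = p + (2 * H - 2) by ring,
          rpow_add hy]
        ring

lemma exists_lintegral_fKernel_Ioo_zero_half_le {p H : ℝ} (hp : -1 < p) (hH : H ≤ 1) :
    ∃ C, ∀ x, 0 < x → ∫⁻ y in Ioo 0 (x / 2), ENNReal.ofReal (fKernel p H x y)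
      ≤ ENNReal.ofReal (C * x ^ (2 * p + 2 * H - 1)) := by
  refine ⟨(1 / 2) ^ (2 * H - 2) / (p + 1), fun x hx ↦ ?_⟩
  calc ∫⁻ y in Ioo 0 (x / 2), ENNReal.ofReal (fKernel p H x y)
      ≤ ∫⁻ y in Ioo 0 (x / 2),
          ENNReal.ofReal ((1 / 2) ^ (2 * H - 2) * x ^ (p + 2 * H - 2) * y ^ p) :=
        setLIntegral_mono' measurableSet_Ioo fun y hy ↦ ENNReal.ofReal_le_ofReal <| by
          rw [fKernel_comm]
          exact (fKernel_le_of_two_mul_le hH hy.1 (by linarith [hy.2])).trans_eq (by ring)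
    _ ≤ ∫⁻ y in Ioo 0 x, ENNReal.ofReal ((1 / 2) ^ (2 * H - 2) * x ^ (p + 2 * H - 2) * y ^ p) :=
        lintegral_mono_set (Ioo_subset_Ioo_right (by linarith))
    _ = ENNReal.ofReal ((1 / 2) ^ (2 * H - 2) * x ^ (p + 2 * H - 2) * (x ^ (p + 1) / (p + 1))) := by
        rw [lintegral_ofReal_const_mul (by positivity), lintegral_rpow_Ioo_zero hp hx,
          ← ENNReal.ofReal_mul (by positivity)]
    _ = ENNReal.ofReal ((1 / 2) ^ (2 * H - 2) / (p + 1) * x ^ (2 * p + 2 * H - 1)) := by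
        rw [show 2 * p + 2 * H - 1 = p + 2 * H - 2 + (p + 1) by ring,
          rpow_add hx (p + 2 * H - 2) (p + 1)]
        congr 1
        ring

lemma exists_lintegral_fKernel_Icc_half_two_mul_le {p H : ℝ} (hH : 1 / 2 < H) :
    ∃ C, ∀ x, 0 < x → ∫⁻ y in Icc (x / 2) (2 * x), ENNReal.ofReal (fKernel p H x y)
      ≤ ENNReal.ofReal (C * x ^ (2 * p + 2 * H - 1)) := by
  refine ⟨((1 / 2) ^ p + 2 ^ p) * (2 * 2 ^ (2 * H - 1) / (2 * H - 1)), fun x hx ↦ ?_⟩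
  have hyp : ∀ y ∈ Icc (x / 2) (2 * x), y ^ p ≤ ((1 / 2) ^ p + 2 ^ p) * x ^ p := by
    intro y hy
    have hy0 : 0 < y := by linarith [hy.1]
    rw [add_mul, ← mul_rpow (by norm_num) hx.le, ← mul_rpow (by norm_num) hx.le]
    rcases le_total 0 p with hp | hp
    · have := rpow_le_rpow hy0.le hy.2 hp
      have : 0 ≤ (1 / 2 * x) ^ p := by positivity
      linarith
    · have := rpow_le_rpow_of_nonpos (by positivity) (by linarith [hy.1] : 1 / 2 * x ≤ y) hp
      have : 0 ≤ (2 * x) ^ p := by positivity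
      linarith
  set K := x ^ p * (((1 / 2) ^ p + 2 ^ p) * x ^ p)
  calc ∫⁻ y in Icc (x / 2) (2 * x), ENNReal.ofReal (fKernel p H x y)
      ≤ ∫⁻ y in Icc (x / 2) (2 * x), ENNReal.ofReal (K * |x - y| ^ (2 * H - 2)) :=
        setLIntegral_mono' measurableSet_Icc fun y hy ↦ ENNReal.ofReal_le_ofReal <| by
          unfold fKernel
          gcongr
          exact mul_le_mul_of_nonneg_left (hyp y hy) (by positivity)
    _ ≤ ∫⁻ y in Ioo (x - 2 * x) (x + 2 * x), ENNReal.ofReal (K * |x - y| ^ (2 * H - 2)) :=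
        lintegral_mono_set fun y hy ↦ ⟨by linarith [hy.1], by linarith [hy.2]⟩
    _ = ENNReal.ofReal K * ∫⁻ y in Ioo (x - 2 * x) (x + 2 * x),
          ENNReal.ofReal (|x - y| ^ (2 * H - 2)) := lintegral_ofReal_const_mul (by positivity) _
    _ ≤ ENNReal.ofReal K * (2 * ENNReal.ofReal ((2 * x) ^ (2 * H - 2 + 1) / (2 * H - 2 + 1))) := by
        gcongr
        exact lintegral_abs_sub_rpow_le (by linarith) (by linarith) x
    _ = ENNReal.ofReal (((1 / 2) ^ p + 2 ^ p) * (2 * 2 ^ (2 * H - 1) / (2 * H - 1))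
          * x ^ (2 * p + 2 * H - 1)) := by
        rw [← ENNReal.ofReal_ofNat 2, ← ENNReal.ofReal_mul (by norm_num),
          ← ENNReal.ofReal_mul (by positivity)]
        congr 1
        rw [show 2 * H - 2 + 1 = 2 * H - 1 by ring, mul_rpow (by norm_num) hx.le,
          show 2 * p + 2 * H - 1 = p + p + (2 * H - 1) by ring, rpow_add hx, rpow_add hx]
        ring

lemma exists_lintegral_fKernel_Ioo_two_mul_two_le {p H : ℝ} (hH : H ≤ 1) (hpH : 0 < p + H) :
    ∃ γ C : ℝ, -1 < γ ∧ ∀ x, 0 < x → ∫⁻ y in Ioo (2 * x) 2, ENNReal.ofReal (fKernel p H x y)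
      ≤ ENNReal.ofReal (C * x ^ γ) := by
  -- `β < -1` makes `∫_{2x}^∞ y ^ β` finite, `β > -2 - p` keeps `x ^ p * (2x) ^ (β + 1)`
  -- integrable at `0`
  obtain ⟨β, hβlo, hβhi⟩ := exists_between
    (lt_min (by linarith) (by linarith) : -2 - p < min (-1) (p + 2 * H - 2))
  have hβ : β < -1 := hβhi.trans_le (min_le_left _ _)
  have hβα : β ≤ p + 2 * H - 2 := hβhi.le.trans (min_le_right _ _)
  have hc : 0 ≤ (1 / 2 : ℝ) ^ (2 * H - 2) * 2 ^ (p + 2 * H - 2 - β) := by positivity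
  set c := (1 / 2 : ℝ) ^ (2 * H - 2) * 2 ^ (p + 2 * H - 2 - β)
  refine ⟨p + (β + 1), c * (-2 ^ (β + 1) / (β + 1)), by linarith, fun x hx ↦ ?_⟩
  calc ∫⁻ y in Ioo (2 * x) 2, ENNReal.ofReal (fKernel p H x y)
      ≤ ∫⁻ y in Ioo (2 * x) 2, ENNReal.ofReal (c * x ^ p * y ^ β) :=
        setLIntegral_mono' measurableSet_Ioo fun y hy ↦ ENNReal.ofReal_le_ofReal <| by
          have hy0 : 0 < y := by linarith [hy.1]
          have hyβ : y ^ (p + 2 * H - 2) ≤ 2 ^ (p + 2 * H - 2 - β) * y ^ β := by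
            rw [← sub_add_cancel (p + 2 * H - 2) β, rpow_add hy0, add_sub_cancel_right]
            gcongr
            linarith [hy.2]
          calc fKernel p H x y ≤ (1 / 2) ^ (2 * H - 2) * x ^ p * y ^ (p + 2 * H - 2) :=
                fKernel_le_of_two_mul_le hH hx hy.1.le
            _ ≤ (1 / 2) ^ (2 * H - 2) * x ^ p * (2 ^ (p + 2 * H - 2 - β) * y ^ β) := by gcongr
            _ = c * x ^ p * y ^ β := by simp only [c]; ring
    _ ≤ ∫⁻ y in Ioi (2 * x), ENNReal.ofReal (c * x ^ p * y ^ β) :=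
        lintegral_mono_set Ioo_subset_Ioi_self
    _ = ENNReal.ofReal (c * x ^ p * (-(2 * x) ^ (β + 1) / (β + 1))) := by
        rw [lintegral_ofReal_const_mul (by positivity), lintegral_rpow_Ioi hβ (by linarith),
          ← ENNReal.ofReal_mul (by positivity)]
    _ = ENNReal.ofReal (c * (-2 ^ (β + 1) / (β + 1)) * x ^ (p + (β + 1))) := by
        rw [mul_rpow (by norm_num) hx.le, rpow_add hx p (β + 1)]
        congr 1
        ring

lemma fPH_one_two_lt_top {p H : ℝ} (hH1 : 1 / 2 < H) (hH : H ≤ 1) (hpH : 0 < p + H) :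
    fPH p H 1 2 < ⊤ := by
  obtain ⟨C₁, h₁⟩ := exists_lintegral_fKernel_Ioo_zero_half_le (p := p) (by linarith) hH
  obtain ⟨C₂, h₂⟩ := exists_lintegral_fKernel_Icc_half_two_mul_le (p := p) hH1
  obtain ⟨γ, C₃, hγ, h₃⟩ := exists_lintegral_fKernel_Ioo_two_mul_two_le hH hpH
  set γ' := 2 * p + 2 * H - 1
  have hinner : ∀ x ∈ Ioo (0 : ℝ) 1, ∫⁻ y in Ioo 0 2, ENNReal.ofReal (fKernel p H x y)
      ≤ ENNReal.ofReal (C₁ * x ^ γ') + ENNReal.ofReal (C₂ * x ^ γ')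
        + ENNReal.ofReal (C₃ * x ^ γ) := by
    intro x hx
    calc ∫⁻ y in Ioo 0 2, ENNReal.ofReal (fKernel p H x y)
        ≤ ∫⁻ y in Ioo 0 (x / 2) ∪ Icc (x / 2) (2 * x) ∪ Ioo (2 * x) 2,
            ENNReal.ofReal (fKernel p H x y) :=
          lintegral_mono_set fun y hy ↦ by
            rcases lt_or_ge y (x / 2) with h | h
            · exact Or.inl (Or.inl ⟨hy.1, h⟩)
            rcases le_or_gt y (2 * x) with h' | h'
            · exact Or.inl (Or.inr ⟨h, h'⟩)
            · exact Or.inr ⟨h', hy.2⟩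
      _ ≤ (∫⁻ y in Ioo 0 (x / 2), ENNReal.ofReal (fKernel p H x y))
          + (∫⁻ y in Icc (x / 2) (2 * x), ENNReal.ofReal (fKernel p H x y))
          + ∫⁻ y in Ioo (2 * x) 2, ENNReal.ofReal (fKernel p H x y) :=
          (lintegral_union_le _ _ _).trans (add_le_add (lintegral_union_le _ _ _) le_rfl)
      _ ≤ _ := by gcongr; exacts [h₁ x hx.1, h₂ x hx.1, h₃ x hx.1]
  have hγ' : -1 < γ' := by linarith
  calc fPH p H 1 2
      ≤ ∫⁻ x in Ioo 0 1, (ENNReal.ofReal (C₁ * x ^ γ') + ENNReal.ofReal (C₂ * x ^ γ')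
          + ENNReal.ofReal (C₃ * x ^ γ)) :=
        setLIntegral_mono' measurableSet_Ioo hinner
    _ < ⊤ := by
        rw [lintegral_add_left (by fun_prop), lintegral_add_left (by fun_prop)]
        exact ENNReal.add_lt_top.2 ⟨ENNReal.add_lt_top.2
          ⟨lintegral_ofReal_mul_rpow_Ioo_zero_one_lt_top C₁ hγ',
            lintegral_ofReal_mul_rpow_Ioo_zero_one_lt_top C₂ hγ'⟩,
          lintegral_ofReal_mul_rpow_Ioo_zero_one_lt_top C₃ hγ⟩

lemma fPH_pos {p H a b : ℝ} (ha : 0 < a) (hb : 0 < b) : 0 < fPH p H a b := by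
  rw [fPH_eq_lintegral_fKernel]
  refine setLIntegral_pos_of_pos (measurable_lintegral_fKernel p H _) (by simp [ha])
    fun x hx ↦ ?_
  have hpos : 0 < ∫⁻ y in Ioo 0 (min x b), ENNReal.ofReal (fKernel p H x y) :=
    setLIntegral_pos_of_pos (by unfold fKernel; fun_prop) (by simp [hx.1, hb])
      fun y hy ↦ ENNReal.ofReal_pos.2
        (fKernel_pos hx.1 hy.1 (hy.2.trans_le (min_le_left _ _)).ne')
  exact hpos.trans_le (lintegral_mono_set (Ioo_subset_Ioo_right (min_le_right _ _)))

lemma intervalIntegrable_rpow_of_one_le {r x : ℝ} (hx : 1 ≤ x) :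
    IntervalIntegrable (fun y : ℝ ↦ y ^ r) volume 1 x :=
  intervalIntegral.intervalIntegrable_rpow (Or.inr (notMem_uIcc_of_lt one_pos (by linarith)))

lemma lintegral_rpow_Ioo_one_eq_psi {α b : ℝ} (hb : 1 ≤ b) :
    ∫⁻ y in Ioo 1 b, ENNReal.ofReal (y ^ α) = ENNReal.ofReal (psi α b) := by
  rw [psi, intervalIntegral.integral_of_le hb, integral_Ioc_eq_integral_Ioo,
    ofReal_integral_eq_lintegral_ofReal
      ((intervalIntegrable_iff_integrableOn_Ioo_of_le hb).1 (intervalIntegrable_rpow_of_one_le hb))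
      ((ae_restrict_mem measurableSet_Ioo).mono fun y hy ↦ rpow_nonneg (by linarith [hy.1]) _)]

lemma psi_le_log {α x : ℝ} (hα : α ≤ -1) (hx : 1 ≤ x) : psi α x ≤ log x :=
  calc psi α x ≤ ∫ y in (1 : ℝ)..x, y ^ (-1 : ℝ) :=
        intervalIntegral.integral_mono_on hx (intervalIntegrable_rpow_of_one_le hx)
          (intervalIntegrable_rpow_of_one_le hx) fun y hy ↦ rpow_le_rpow_of_exponent_le hy.1 hα
    _ = log x := by
        simp_rw [rpow_neg_one]
        rw [integral_inv_of_pos one_pos (by linarith), div_one]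

lemma psi_le_rpow_div {α : ℝ} (hα : -1 < α) (x : ℝ) : psi α x ≤ x ^ (α + 1) / (α + 1) := by
  rw [psi, integral_rpow (Or.inl hα), one_rpow]
  gcongr
  · linarith
  · linarith

lemma exists_psi_exp_le (α : ℝ) :
    ∃ C, 0 ≤ C ∧ ∀ τ, 0 ≤ τ → psi α (exp τ) ≤ C * max τ (exp (τ * (α + 1))) := by
  rcases le_or_gt α (-1) with hα | hα
  · refine ⟨1, zero_le_one, fun τ hτ ↦ ?_⟩
    calc psi α (exp τ) ≤ log (exp τ) := psi_le_log hα (one_le_exp hτ)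
      _ ≤ 1 * max τ (exp (τ * (α + 1))) := by rw [log_exp, one_mul]; exact le_max_left _ _
  · have hC : 0 ≤ 1 / (α + 1) := (one_div_pos.2 (by linarith)).le
    refine ⟨1 / (α + 1), hC, fun τ _ ↦ ?_⟩
    calc psi α (exp τ) ≤ exp τ ^ (α + 1) / (α + 1) := psi_le_rpow_div hα _
      _ = 1 / (α + 1) * exp (τ * (α + 1)) := by rw [← exp_mul]; ring
      _ ≤ 1 / (α + 1) * max τ (exp (τ * (α + 1))) :=
          mul_le_mul_of_nonneg_left (le_max_right _ _) hC

lemma fPH_one_le_add_psi {p H b : ℝ} (hp : -1 < p) (hH : H ≤ 1) (hb : 1 ≤ b) :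
    fPH p H 1 b ≤ fPH p H 1 2
      + ENNReal.ofReal ((1 / 2) ^ (2 * H - 2) / (p + 1) * psi (p + 2 * H - 2) b) := by
  set J := ∫⁻ y in Ico 2 b, ENNReal.ofReal (y ^ (p + 2 * H - 2))
  have hJ : J ≤ ENNReal.ofReal (psi (p + 2 * H - 2) b) :=
    (lintegral_mono_set (fun y hy ↦ ⟨by linarith [hy.1], hy.2⟩ : Ico 2 b ⊆ Ioo 1 b)).trans_eq
      (lintegral_rpow_Ioo_one_eq_psi hb)
  have hinner : ∀ x ∈ Ioo (0 : ℝ) 1, ∫⁻ y in Ioo 0 b, ENNReal.ofReal (fKernel p H x y)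
      ≤ (∫⁻ y in Ioo 0 2, ENNReal.ofReal (fKernel p H x y))
        + ENNReal.ofReal ((1 / 2) ^ (2 * H - 2) * x ^ p) * J := by
    intro x hx
    have hx0 : 0 < x := hx.1
    calc ∫⁻ y in Ioo 0 b, ENNReal.ofReal (fKernel p H x y)
        ≤ ∫⁻ y in Ioo 0 2 ∪ Ico 2 b, ENNReal.ofReal (fKernel p H x y) :=
          lintegral_mono_set fun y hy ↦ (lt_or_ge y 2).imp (⟨hy.1, ·⟩) (⟨·, hy.2⟩)
      _ ≤ (∫⁻ y in Ioo 0 2, ENNReal.ofReal (fKernel p H x y))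
          + ∫⁻ y in Ico 2 b, ENNReal.ofReal (fKernel p H x y) := lintegral_union_le _ _ _
      _ ≤ (∫⁻ y in Ioo 0 2, ENNReal.ofReal (fKernel p H x y))
          + ∫⁻ y in Ico 2 b,
            ENNReal.ofReal ((1 / 2) ^ (2 * H - 2) * x ^ p * y ^ (p + 2 * H - 2)) := by
          refine add_le_add le_rfl (setLIntegral_mono' measurableSet_Ico fun y hy ↦ ?_)
          exact ENNReal.ofReal_le_ofReal
            (fKernel_le_of_two_mul_le hH hx0 (by linarith [hx.2, hy.1]))
      _ = _ := by rw [lintegral_ofReal_const_mul (by positivity)]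
  calc fPH p H 1 b
      ≤ ∫⁻ x in Ioo 0 1, ((∫⁻ y in Ioo 0 2, ENNReal.ofReal (fKernel p H x y))
          + ENNReal.ofReal ((1 / 2) ^ (2 * H - 2) * x ^ p) * J) :=
        setLIntegral_mono' measurableSet_Ioo hinner
    _ = fPH p H 1 2 + ENNReal.ofReal ((1 / 2) ^ (2 * H - 2) / (p + 1)) * J := by
        rw [lintegral_add_left (measurable_lintegral_fKernel p H _),
          lintegral_mul_const _ (by fun_prop), lintegral_ofReal_const_mul (by positivity),
          lintegral_rpow_Ioo_zero hp one_pos, one_rpow, ← ENNReal.ofReal_mul (by positivity),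
          mul_one_div]
        rfl
    _ ≤ _ := by
        rw [ENNReal.ofReal_mul (div_nonneg (by positivity) (by linarith))]
        gcongr

lemma one_le_exp_one_mul_max {τ a : ℝ} (hτ : 0 ≤ τ) (ha : -1 ≤ a) :
    1 ≤ exp 1 * max τ (exp (τ * a)) := by
  rcases le_total 1 τ with h | h
  · calc (1 : ℝ) ≤ max τ (exp (τ * a)) := h.trans (le_max_left _ _)
      _ ≤ exp 1 * max τ (exp (τ * a)) :=
          le_mul_of_one_le_left (by positivity) (one_le_exp zero_le_one)
  · calc (1 : ℝ) ≤ exp (1 + τ * a) := one_le_exp (by nlinarith)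
      _ = exp 1 * exp (τ * a) := exp_add _ _
      _ ≤ exp 1 * max τ (exp (τ * a)) := by gcongr; exact le_max_right _ _

lemma fPH_one_exp_le {p H : ℝ} (hH1 : 1 / 2 < H) (hH : H ≤ 1) (hpH : 0 < p + H) :
    ∃ K ≠ ⊤, ∀ τ, 0 ≤ τ →
      fPH p H 1 (exp τ) ≤ K * ENNReal.ofReal (max τ (exp (τ * (p + 2 * H - 1)))) := by
  obtain ⟨C, hC, hψ⟩ := exists_psi_exp_le (p + 2 * H - 2)
  set D : ℝ := (1 / 2) ^ (2 * H - 2) / (p + 1)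
  have hD : 0 ≤ D := div_nonneg (by positivity) (by linarith)
  refine ⟨fPH p H 1 2 * ENNReal.ofReal (exp 1) + ENNReal.ofReal (D * C),
    ENNReal.add_ne_top.2 ⟨ENNReal.mul_ne_top (fPH_one_two_lt_top hH1 hH hpH).ne
      ENNReal.ofReal_ne_top, ENNReal.ofReal_ne_top⟩, fun τ hτ ↦ ?_⟩
  set g := max τ (exp (τ * (p + 2 * H - 1)))
  have hg : 1 ≤ exp 1 * g := one_le_exp_one_mul_max hτ (by linarith)
  have hψτ : psi (p + 2 * H - 2) (exp τ) ≤ C * g := by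
    simpa only [show p + 2 * H - 2 + 1 = p + 2 * H - 1 by ring] using hψ τ hτ
  calc fPH p H 1 (exp τ) ≤ fPH p H 1 2 + ENNReal.ofReal (D * psi (p + 2 * H - 2) (exp τ)) :=
        fPH_one_le_add_psi (by linarith) hH (one_le_exp hτ)
    _ ≤ fPH p H 1 2 * ENNReal.ofReal (exp 1 * g) + ENNReal.ofReal (D * (C * g)) := by
        gcongr
        exact le_mul_of_one_le_right' (ENNReal.one_le_ofReal.2 hg)
    _ = (fPH p H 1 2 * ENNReal.ofReal (exp 1) + ENNReal.ofReal (D * C)) * ENNReal.ofReal g := by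
        rw [← mul_assoc D, ENNReal.ofReal_mul (exp_pos 1).le, ENNReal.ofReal_mul (mul_nonneg hD hC)]
        ring

lemma integrableOn_max_mul_exp_neg {q s : ℝ} (hq : 0 < q) (hs : 0 < s) :
    IntegrableOn (fun τ ↦ max (τ * exp (-τ * q)) (exp (-τ * s))) (Ici 0) := by
  rw [integrableOn_Ici_iff_integrableOn_Ioi]
  have h₁ : IntegrableOn (fun τ : ℝ ↦ τ * exp (-τ * q)) (Ioi 0) :=
    (integrableOn_rpow_mul_exp_neg_mul_rpow (s := 1) (p := 1) (by norm_num) one_pos hq).congr_fun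
      (fun τ _ ↦ by simp only [rpow_one]; ring_nf) measurableSet_Ioi
  have h₂ : IntegrableOn (fun τ : ℝ ↦ exp (-τ * s)) (Ioi 0) :=
    (exp_neg_integrableOn_Ioi 0 hs).congr_fun (fun τ _ ↦ by ring_nf) measurableSet_Ioi
  exact h₁.sup h₂

lemma exp_neg_mul_mul_max (p H τ : ℝ) :
    exp (-τ * (p + H)) * max τ (exp (τ * (p + 2 * H - 1)))
      = max (τ * exp (-τ * (p + H))) (exp (-τ * (1 - H))) := by
  rw [mul_max_of_nonneg _ _ (exp_pos _).le, mul_comm, ← exp_add]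
  ring_nf

theorem stmt_4 (p H : ℝ) (hH1 : 1/2 < H) (hH2 : H < 1) (hpH : 0 < p + H) :
    ∃ c : ℝ≥0∞, c < ⊤ ∧
      (∀ τ : ℝ, 0 ≤ τ →
        ENNReal.ofReal (Real.exp (-τ * (p + H))) * fPH p H 1 (Real.exp τ) / fPH p H 1 1
          ≤ c * ENNReal.ofReal (max (τ * Real.exp (-τ * (p + H)))
              (Real.exp (-τ * (1 - H))))) ∧
      (∫⁻ τ in Ici (0:ℝ),
        ENNReal.ofReal (Real.exp (-τ * (p + H))) * fPH p H 1 (Real.exp τ) / fPH p H 1 1) < ⊤ := by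
  obtain ⟨K, hK, hf⟩ := fPH_one_exp_le hH1 hH2.le hpH
  have hc : K / fPH p H 1 1 < ⊤ := ENNReal.div_lt_top hK (fPH_pos one_pos one_pos).ne'
  have hbound : ∀ τ : ℝ, 0 ≤ τ →
      ENNReal.ofReal (exp (-τ * (p + H))) * fPH p H 1 (exp τ) / fPH p H 1 1
        ≤ K / fPH p H 1 1
          * ENNReal.ofReal (max (τ * exp (-τ * (p + H))) (exp (-τ * (1 - H)))) := by
    intro τ hτ
    calc ENNReal.ofReal (exp (-τ * (p + H))) * fPH p H 1 (exp τ) / fPH p H 1 1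
        ≤ ENNReal.ofReal (exp (-τ * (p + H)))
          * (K * ENNReal.ofReal (max τ (exp (τ * (p + 2 * H - 1))))) / fPH p H 1 1 := by
          gcongr
          exact hf τ hτ
      _ = _ := by
          rw [← exp_neg_mul_mul_max, ENNReal.ofReal_mul (exp_pos _).le, div_eq_mul_inv,
            div_eq_mul_inv]
          ring
  refine ⟨_, hc, hbound, ?_⟩
  calc _ ≤ ∫⁻ τ in Ici (0 : ℝ), K / fPH p H 1 1
          * ENNReal.ofReal (max (τ * exp (-τ * (p + H))) (exp (-τ * (1 - H)))) :=
        setLIntegral_mono' measurableSet_Ici hbound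
    _ = K / fPH p H 1 1 * ∫⁻ τ in Ici (0 : ℝ),
          ENNReal.ofReal (max (τ * exp (-τ * (p + H))) (exp (-τ * (1 - H)))) :=
        lintegral_const_mul' _ _ hc.ne
    _ < ⊤ := ENNReal.mul_lt_top hc
        (integrableOn_max_mul_exp_neg (by linarith) (by linarith)).lintegral_lt_top
end

section
/- For fixed $p>-1$ and $\tau>0$, $\lim_{H\uparrow 1} \frac{f_{p,H}(1,e^{\tau/(1-H)})}{e^{\tau(p+2H-1)/(1-H)}}=\frac{1}{(p+1)^2}$. -/
open MeasureTheory Real Set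
open scoped ENNReal

open Filter Topology

/-!
On the strip `y ≥ N > 1`, `x ∈ (0,1)` one has `(1 - 1/N) y ≤ y - x ≤ y`, so there the kernel
`|x - y|^{2H-2}` lies between `y^{2H-2}` and `(1 - 1/N)^{2H-2} y^{2H-2}`. Integrating,
`f_{p,H}(1,b)` lies between `ψ_{p+2H-2}(b)/(p+1)` and
`f_{p,H}(1,N) + (1 - 1/N)^{2H-2} ψ_{p+2H-2}(b)/(p+1)`.
With `b = e^{τ/(1-H)}` we have `ψ_{p+2H-2}(b) = (b^{p+2H-1} - 1)/(p+2H-1)` and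
`b^{p+2H-1} = e^{τ(p+2H-1)/(1-H)} → ∞`, so both bounds, divided by that exponential, tend
to `1/(p+1)^2` as `H ↑ 1`, provided `f_{p,H}(1,N)` stays bounded. It does:
`t^{2H-2} ≤ t^{2H₀-2} + 1` for `H₀ ≤ H ≤ 1`, and `f_{p,H₀}(1,N) < ∞` because, with `q = min p 0`
and `θ = 2H₀ - 2`, the bound `y^q |x-y|^θ ≤ y^{q+θ} + |x-y|^{q+θ}` leaves only one-dimensional
integrable singularities.
-/

lemma lintegral_Ioo_ofReal_eq_intervalIntegral {g : ℝ → ℝ} {a b : ℝ} (hab : a ≤ b)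
    (hg : IntervalIntegrable g volume a b) (hg0 : ∀ x ∈ Ioo a b, 0 ≤ g x) :
    ∫⁻ x in Ioo a b, ENNReal.ofReal (g x) = ENNReal.ofReal (∫ x in a..b, g x) := by
  rw [intervalIntegral.integral_of_le hab, integral_Ioc_eq_integral_Ioo,
    ofReal_integral_eq_lintegral_ofReal
      ((intervalIntegrable_iff_integrableOn_Ioo_of_le hab).1 hg)
      ((ae_restrict_iff' measurableSet_Ioo).2 (ae_of_all _ hg0))]

lemma lintegral_Ioo_zero_rpow {c a : ℝ} (hc : -1 < c) (ha : 0 ≤ a) :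
    ∫⁻ x in Ioo 0 a, ENNReal.ofReal (x ^ c) = ENNReal.ofReal (a ^ (c + 1) / (c + 1)) := by
  rw [lintegral_Ioo_ofReal_eq_intervalIntegral ha (intervalIntegral.intervalIntegrable_rpow' hc)
    fun x hx => rpow_nonneg hx.1.le c, integral_rpow (Or.inl hc), zero_rpow (by linarith),
    sub_zero]

lemma psi_eq_rpow_sub_one_div {c x : ℝ} (hc : c ≠ -1) (hx : 0 < x) :
    psi c x = (x ^ (c + 1) - 1) / (c + 1) := by
  rw [psi, integral_rpow (Or.inr ⟨hc, notMem_uIcc_of_lt one_pos hx⟩), one_rpow]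

lemma psi_nonneg {c x : ℝ} (hx : 1 ≤ x) : 0 ≤ psi c x :=
  intervalIntegral.integral_nonneg hx fun y hy => rpow_nonneg (by linarith [hy.1]) c

lemma lintegral_Ico_one_rpow_eq_psi {c b : ℝ} (hb : 1 ≤ b) :
    ∫⁻ y in Ico 1 b, ENNReal.ofReal (y ^ c) = ENNReal.ofReal (psi c b) := by
  have h0 : (0 : ℝ) ∉ uIcc 1 b := notMem_uIcc_of_lt one_pos (by linarith)
  rw [← Measure.restrict_congr_set Ioo_ae_eq_Ico, lintegral_Ioo_ofReal_eq_intervalIntegral hb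
    (intervalIntegral.intervalIntegrable_rpow (Or.inr h0))
    fun y hy => rpow_nonneg (by linarith [hy.1]) c, psi]

lemma lintegral_Ioo_rpow_mul {p a : ℝ} (hp : -1 < p) (ha : 0 ≤ a) (g : ℝ → ℝ) (s : Set ℝ) :
    ∫⁻ x in Ioo 0 a, ∫⁻ y in s, ENNReal.ofReal (x ^ p * g y) =
      ENNReal.ofReal (a ^ (p + 1) / (p + 1)) * ∫⁻ y in s, ENNReal.ofReal (g y) := by
  rw [← lintegral_Ioo_zero_rpow hp ha, ← lintegral_mul_const _ (by fun_prop)]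
  refine setLIntegral_congr_fun measurableSet_Ioo fun x hx => ?_
  simp_rw [ENNReal.ofReal_mul (rpow_nonneg hx.1.le p)]
  exact lintegral_const_mul' _ _ ENNReal.ofReal_ne_top

lemma measurable_lintegral_fPH_integrand (p θ : ℝ) (s : Set ℝ) :
    Measurable fun x : ℝ => ∫⁻ y in s, ENNReal.ofReal (x ^ p * y ^ p * |x - y| ^ θ) :=
  Measurable.lintegral_prod_right'
    (f := fun z : ℝ × ℝ => ENNReal.ofReal (z.1 ^ p * z.2 ^ p * |z.1 - z.2| ^ θ)) (by fun_prop)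

lemma rpow_le_rpow_add_one {t θ₀ θ : ℝ} (ht : 0 ≤ t) (hθ₀ : θ₀ ≤ θ) (hθ : θ ≤ 0) :
    t ^ θ ≤ t ^ θ₀ + 1 := by
  rcases ht.eq_or_lt with rfl | ht
  · exact (zero_rpow_le_one θ).trans (le_add_of_nonneg_left (zero_rpow_nonneg θ₀))
  rcases le_total t 1 with h1 | h1
  · exact (rpow_le_rpow_of_exponent_ge ht h1 hθ₀).trans (le_add_of_nonneg_right zero_le_one)
  · exact (rpow_le_one_of_one_le_of_nonpos h1 hθ).trans
      (le_add_of_nonneg_left (rpow_nonneg ht.le θ₀))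

lemma rpow_mul_rpow_le_rpow_add_rpow {u v q θ : ℝ} (hu : 0 < u) (hv : 0 ≤ v) (hq : q ≤ 0)
    (hθ : θ ≤ 0) : u ^ q * v ^ θ ≤ u ^ (q + θ) + v ^ (q + θ) := by
  rcases le_total u v with huv | hvu
  · calc u ^ q * v ^ θ ≤ u ^ q * u ^ θ :=
          mul_le_mul_of_nonneg_left (rpow_le_rpow_of_nonpos hu huv hθ) (rpow_nonneg hu.le q)
      _ = u ^ (q + θ) := (rpow_add hu q θ).symm
      _ ≤ _ := le_add_of_nonneg_right (rpow_nonneg hv _)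
  rcases hv.eq_or_lt with rfl | hv
  · rcases eq_or_ne θ 0 with rfl | hθ0
    · simpa using zero_rpow_nonneg q
    · rw [zero_rpow hθ0, mul_zero]
      positivity
  calc u ^ q * v ^ θ ≤ v ^ q * v ^ θ :=
        mul_le_mul_of_nonneg_right (rpow_le_rpow_of_nonpos hv hvu hq) (rpow_nonneg hv.le θ)
    _ = v ^ (q + θ) := (rpow_add hv q θ).symm
    _ ≤ _ := le_add_of_nonneg_left (rpow_nonneg hu.le _)

lemma rpow_le_rpow_sub_mul_rpow {x a p q : ℝ} (hx : 0 < x) (hxa : x ≤ a) (hqp : q ≤ p) :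
    x ^ p ≤ a ^ (p - q) * x ^ q := by
  calc x ^ p = x ^ (p - q) * x ^ q := by rw [← rpow_add hx, sub_add_cancel]
    _ ≤ a ^ (p - q) * x ^ q := by gcongr

lemma lintegral_Ioo_abs_rpow_lt_top {s : ℝ} (hs : -1 < s) (c : ℝ) :
    ∫⁻ t in Ioo (-c) c, ENNReal.ofReal (|t| ^ s) < ⊤ := by
  have h : IntegrableOn (fun t : ℝ => |t| ^ s) (Metric.ball 0 c) :=
    integrableOn_ball_of_norm_le_rpow (C := 1) (α := -s) (by simp)
      (by rw [Module.finrank_self, Nat.cast_one]; linarith)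
      (ae_of_all _ fun t => by simp [abs_of_nonneg (rpow_nonneg (abs_nonneg t) s)])
      (continuous_abs.measurable.pow_const s).aestronglyMeasurable
  rw [Real.ball_eq_Ioo, zero_sub, zero_add] at h
  exact h.lintegral_lt_top

lemma lintegral_Ioo_abs_sub_rpow_le {s x a b : ℝ} (hx : 0 ≤ x) (hxa : x ≤ a) :
    ∫⁻ y in Ioo 0 b, ENNReal.ofReal (|x - y| ^ s) ≤
      ∫⁻ t in Ioo (-(a + b)) (a + b), ENNReal.ofReal (|t| ^ s) := by
  have hshift := (Measure.measurePreserving_sub_left volume x).setLIntegral_comp_preimage_emb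
    (MeasurableEquiv.subLeft x).measurableEmbedding (fun t => ENNReal.ofReal (|t| ^ s))
    (Ioo (-(a + b)) (a + b))
  rw [preimage_const_sub_Ioo] at hshift
  rw [← hshift]
  exact lintegral_mono_set fun y hy => ⟨by linarith [hy.1, hy.2], by linarith [hy.1, hy.2]⟩

lemma rpow_mul_rpow_mul_abs_sub_rpow_le {p q θ a b x y : ℝ} (hx : 0 < x) (hxa : x ≤ a)
    (hy : 0 < y) (hyb : y ≤ b) (hqp : q ≤ p) (hq : q ≤ 0) (hθ : θ ≤ 0) :
    x ^ p * y ^ p * |x - y| ^ θ ≤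
      a ^ (p - q) * b ^ (p - q) * x ^ q * (y ^ (q + θ) + |x - y| ^ (q + θ)) := by
  have ha : 0 ≤ a := hx.le.trans hxa
  have hb : 0 ≤ b := hy.le.trans hyb
  have hxy := rpow_mul_rpow_le_rpow_add_rpow hy (abs_nonneg (x - y)) hq hθ
  calc x ^ p * y ^ p * |x - y| ^ θ
      ≤ (a ^ (p - q) * x ^ q) * (b ^ (p - q) * y ^ q) * |x - y| ^ θ := by
        gcongr ?_ * ?_ * _
        exacts [rpow_le_rpow_sub_mul_rpow hx hxa hqp, rpow_le_rpow_sub_mul_rpow hy hyb hqp]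
    _ = a ^ (p - q) * b ^ (p - q) * x ^ q * (y ^ q * |x - y| ^ θ) := by ring
    _ ≤ _ := by gcongr

theorem fPH_lt_top {p H a b : ℝ} (hp : -1 < p) (hH : 1 / 2 < H) (hH1 : H ≤ 1)
    (hpH : 1 < p + 2 * H) (ha : 0 ≤ a) (hb : 0 ≤ b) : fPH p H a b < ⊤ := by
  set q := min p 0
  set s := q + (2 * H - 2)
  have hq : -1 < q := lt_min hp (by norm_num)
  have hs : -1 < s := by
    rcases min_cases p 0 with h | h <;> simp only [s, q, h.1] <;> linarith
  set K := a ^ (p - q) * b ^ (p - q)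
  have hK : 0 ≤ K := by positivity
  set M := ENNReal.ofReal (b ^ (s + 1) / (s + 1)) +
    ∫⁻ t in Ioo (-(a + b)) (a + b), ENNReal.ofReal (|t| ^ s)
  have hM : M < ⊤ :=
    ENNReal.add_lt_top.2 ⟨ENNReal.ofReal_lt_top, lintegral_Ioo_abs_rpow_lt_top hs _⟩
  have inner : ∀ x ∈ Ioo 0 a,
      ∫⁻ y in Ioo 0 b, ENNReal.ofReal (x ^ p * y ^ p * |x - y| ^ (2 * H - 2)) ≤
        ENNReal.ofReal (K * x ^ q) * M := by
    intro x hx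
    calc _ ≤ ∫⁻ y in Ioo 0 b, ENNReal.ofReal (K * x ^ q) *
            (ENNReal.ofReal (y ^ s) + ENNReal.ofReal (|x - y| ^ s)) := by
          refine setLIntegral_mono' measurableSet_Ioo fun y hy => ?_
          rw [← ENNReal.ofReal_add (rpow_nonneg hy.1.le _) (by positivity),
            ← ENNReal.ofReal_mul (mul_nonneg hK (rpow_nonneg hx.1.le q))]
          exact ENNReal.ofReal_le_ofReal (rpow_mul_rpow_mul_abs_sub_rpow_le hx.1 hx.2.le hy.1
            hy.2.le (min_le_left p 0) (min_le_right p 0) (by linarith))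
      _ ≤ ENNReal.ofReal (K * x ^ q) * M := by
          rw [lintegral_const_mul' _ _ ENNReal.ofReal_ne_top, lintegral_add_left (by fun_prop),
            lintegral_Ioo_zero_rpow hs hb]
          exact mul_le_mul' le_rfl
            (add_le_add le_rfl (lintegral_Ioo_abs_sub_rpow_le hx.1.le hx.2.le))
  calc fPH p H a b ≤ ∫⁻ x in Ioo 0 a, ENNReal.ofReal (K * x ^ q) * M :=
        setLIntegral_mono' measurableSet_Ioo inner
    _ = ENNReal.ofReal K * ENNReal.ofReal (a ^ (q + 1) / (q + 1)) * M := by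
        simp_rw [ENNReal.ofReal_mul hK]
        rw [lintegral_mul_const' _ _ hM.ne, lintegral_const_mul' _ _ ENNReal.ofReal_ne_top,
          lintegral_Ioo_zero_rpow hq ha]
    _ < ⊤ :=
        ENNReal.mul_lt_top (ENNReal.mul_lt_top ENNReal.ofReal_lt_top ENNReal.ofReal_lt_top) hM

theorem fPH_le_fPH_add_fPH_one {p H₀ H a b : ℝ} (hH₀ : H₀ ≤ H) (hH : H ≤ 1) :
    fPH p H a b ≤ fPH p H₀ a b + fPH p 1 a b := by
  unfold fPH
  rw [← lintegral_add_left (measurable_lintegral_fPH_integrand p _ _)]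
  refine setLIntegral_mono' measurableSet_Ioo fun x hx => ?_
  rw [← lintegral_add_left (by fun_prop)]
  refine setLIntegral_mono' measurableSet_Ioo fun y hy => ?_
  have hxy : 0 ≤ x ^ p * y ^ p := mul_nonneg (rpow_nonneg hx.1.le p) (rpow_nonneg hy.1.le p)
  rw [← ENNReal.ofReal_add (by positivity) (by positivity), ← mul_add]
  refine ENNReal.ofReal_le_ofReal (mul_le_mul_of_nonneg_left ?_ hxy)
  rw [show 2 * (1 : ℝ) - 2 = 0 by norm_num, rpow_zero]
  exact rpow_le_rpow_add_one (abs_nonneg _) (by linarith) (by linarith)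

theorem fPH_one_one_add_psi_le {p H b : ℝ} (hp : -1 < p) (hH : H ≤ 1) (hb : 1 ≤ b) :
    fPH p H 1 1 + ENNReal.ofReal (psi (p + 2 * H - 2) b / (p + 1)) ≤ fPH p H 1 b := by
  have tail : ENNReal.ofReal (psi (p + 2 * H - 2) b / (p + 1)) ≤
      ∫⁻ x in Ioo 0 1, ∫⁻ y in Ico 1 b,
        ENNReal.ofReal (x ^ p * y ^ p * |x - y| ^ (2 * H - 2)) := by
    calc ENNReal.ofReal (psi (p + 2 * H - 2) b / (p + 1))
        = ∫⁻ x in Ioo 0 1, ∫⁻ y in Ico 1 b, ENNReal.ofReal (x ^ p * y ^ (p + 2 * H - 2)) := by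
          rw [lintegral_Ioo_rpow_mul hp zero_le_one, lintegral_Ico_one_rpow_eq_psi hb, one_rpow,
            ← ENNReal.ofReal_mul (one_div_pos.2 (by linarith)).le]
          congr 1
          ring
      _ ≤ _ := by
          refine setLIntegral_mono' measurableSet_Ioo fun x hx => ?_
          refine setLIntegral_mono' measurableSet_Ico fun y hy => ENNReal.ofReal_le_ofReal ?_
          have hy0 : 0 < y := one_pos.trans_le hy.1
          have hyx : |x - y| ≤ y := by
            rw [abs_sub_comm, abs_of_pos (by linarith [hx.2, hy.1])]; linarith [hx.1]
          have hxy : 0 < |x - y| := abs_pos.2 (by linarith [hx.2, hy.1])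
          rw [show p + 2 * H - 2 = p + (2 * H - 2) by ring, rpow_add hy0, ← mul_assoc]
          exact mul_le_mul_of_nonneg_left (rpow_le_rpow_of_nonpos hxy hyx (by linarith))
            (mul_nonneg (rpow_nonneg hx.1.le p) (rpow_nonneg hy0.le p))
  unfold fPH
  rw [← Ioo_union_Ico_eq_Ioo zero_lt_one hb]
  simp_rw [lintegral_union measurableSet_Ico
    (Ico_disjoint_Ico_same.mono_left Ioo_subset_Ico_self)]
  rw [lintegral_add_left (measurable_lintegral_fPH_integrand p _ _)]
  exact add_le_add le_rfl tail

lemma one_sub_one_div_pos {N : ℝ} (hN : 1 < N) : 0 < 1 - 1 / N :=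
  sub_pos.2 ((div_lt_one (one_pos.trans hN)).2 hN)

lemma abs_sub_rpow_le_mul_rpow {x y N θ : ℝ} (hx : x ∈ Ioo 0 1) (hN : 1 < N) (hy : N ≤ y)
    (hθ : θ ≤ 0) : |x - y| ^ θ ≤ (1 - 1 / N) ^ θ * y ^ θ := by
  have hN0 : 0 < N := one_pos.trans hN
  have hyN : 1 ≤ y / N := (one_le_div hN0).2 hy
  have hfar : (1 - 1 / N) * y ≤ |x - y| := by
    rw [abs_sub_comm, abs_of_pos (by linarith [hx.2])]
    have : (1 - 1 / N) * y = y - y / N := by ring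
    linarith [hx.2]
  rw [← mul_rpow (one_sub_one_div_pos hN).le (by linarith)]
  exact rpow_le_rpow_of_nonpos (mul_pos (one_sub_one_div_pos hN) (by linarith)) hfar hθ

theorem fPH_le_fPH_add_psi {p H N b : ℝ} (hp : -1 < p) (hH : H ≤ 1) (hN : 1 < N)
    (hb : 1 ≤ b) :
    fPH p H 1 b ≤ fPH p H 1 N +
      ENNReal.ofReal ((1 - 1 / N) ^ (2 * H - 2) * psi (p + 2 * H - 2) b / (p + 1)) := by
  have hc : 0 ≤ (1 - 1 / N) ^ (2 * H - 2) := rpow_nonneg (one_sub_one_div_pos hN).le _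
  have tail : ∫⁻ x in Ioo 0 1, ∫⁻ y in Ico N b,
        ENNReal.ofReal (x ^ p * y ^ p * |x - y| ^ (2 * H - 2)) ≤
      ENNReal.ofReal ((1 - 1 / N) ^ (2 * H - 2) * psi (p + 2 * H - 2) b / (p + 1)) := by
    calc _ ≤ ∫⁻ x in Ioo 0 1, ∫⁻ y in Ico 1 b,
            ENNReal.ofReal (x ^ p * ((1 - 1 / N) ^ (2 * H - 2) * y ^ (p + 2 * H - 2))) := by
          refine setLIntegral_mono' measurableSet_Ioo fun x hx => ?_
          refine le_trans ?_ (lintegral_mono_set (Ico_subset_Ico_left hN.le))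
          refine setLIntegral_mono' measurableSet_Ico fun y hy => ENNReal.ofReal_le_ofReal ?_
          have hy0 : 0 < y := one_pos.trans (hN.trans_le hy.1)
          calc x ^ p * y ^ p * |x - y| ^ (2 * H - 2)
              ≤ x ^ p * y ^ p * ((1 - 1 / N) ^ (2 * H - 2) * y ^ (2 * H - 2)) :=
                mul_le_mul_of_nonneg_left (abs_sub_rpow_le_mul_rpow hx hN hy.1 (by linarith))
                  (mul_nonneg (rpow_nonneg hx.1.le p) (rpow_nonneg hy0.le p))
            _ = _ := by rw [show p + 2 * H - 2 = p + (2 * H - 2) by ring, rpow_add hy0]; ring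
      _ = _ := by
          rw [lintegral_Ioo_rpow_mul hp zero_le_one]
          simp_rw [ENNReal.ofReal_mul hc]
          rw [lintegral_const_mul' _ _ ENNReal.ofReal_ne_top, lintegral_Ico_one_rpow_eq_psi hb,
            one_rpow, ← ENNReal.ofReal_mul hc,
            ← ENNReal.ofReal_mul (one_div_pos.2 (by linarith)).le]
          congr 1
          ring
  unfold fPH
  calc _ ≤ ∫⁻ x in Ioo 0 1,
        ((∫⁻ y in Ioo 0 N, ENNReal.ofReal (x ^ p * y ^ p * |x - y| ^ (2 * H - 2))) +
          ∫⁻ y in Ico N b, ENNReal.ofReal (x ^ p * y ^ p * |x - y| ^ (2 * H - 2))) := by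
        refine lintegral_mono fun x => (lintegral_mono_set fun y hy => ?_).trans
          (lintegral_union_le _ _ _)
        rcases lt_or_ge y N with h | h
        exacts [Or.inl ⟨hy.1, h⟩, Or.inr ⟨h, hy.2⟩]
    _ = _ := lintegral_add_left (measurable_lintegral_fPH_integrand p _ _) _
    _ ≤ _ := add_le_add le_rfl tail

theorem psi_div_le_toReal_fPH {p H b : ℝ} (hp : -1 < p) (hH : 1 / 2 < H) (hH1 : H ≤ 1)
    (hpH : 1 < p + 2 * H) (hb : 1 ≤ b) :
    psi (p + 2 * H - 2) b / (p + 1) ≤ (fPH p H 1 b).toReal :=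
  (ENNReal.ofReal_le_iff_le_toReal (fPH_lt_top hp hH hH1 hpH zero_le_one (by linarith)).ne).1
    (le_add_self.trans (fPH_one_one_add_psi_le hp hH1 hb))

theorem toReal_fPH_le {p H₀ H N b : ℝ} (hp : -1 < p) (hH₀ : 1 / 2 < H₀) (hpH₀ : 1 < p + 2 * H₀)
    (hH₀H : H₀ ≤ H) (hH : H ≤ 1) (hN : 1 < N) (hb : 1 ≤ b) :
    (fPH p H 1 b).toReal ≤ (fPH p H₀ 1 N + fPH p 1 1 N).toReal +
      (1 - 1 / N) ^ (2 * H - 2) * psi (p + 2 * H - 2) b / (p + 1) := by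
  have hfin : fPH p H₀ 1 N + fPH p 1 1 N ≠ ⊤ := ENNReal.add_ne_top.2
    ⟨(fPH_lt_top hp hH₀ (by linarith) hpH₀ zero_le_one (by linarith)).ne,
      (fPH_lt_top hp (by norm_num) le_rfl (by linarith) zero_le_one (by linarith)).ne⟩
  have hnn : 0 ≤ (1 - 1 / N) ^ (2 * H - 2) * psi (p + 2 * H - 2) b / (p + 1) :=
    div_nonneg (mul_nonneg (rpow_nonneg (one_sub_one_div_pos hN).le _) (psi_nonneg hb))
      (by linarith)
  calc (fPH p H 1 b).toReal
      ≤ (fPH p H₀ 1 N + fPH p 1 1 N +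
          ENNReal.ofReal ((1 - 1 / N) ^ (2 * H - 2) * psi (p + 2 * H - 2) b / (p + 1))).toReal :=
        ENNReal.toReal_mono (ENNReal.add_ne_top.2 ⟨hfin, ENNReal.ofReal_ne_top⟩)
          ((fPH_le_fPH_add_psi hp hH hN hb).trans
            (add_le_add (fPH_le_fPH_add_fPH_one hH₀H hH) le_rfl))
    _ = _ := by rw [ENNReal.toReal_add hfin ENNReal.ofReal_ne_top, ENNReal.toReal_ofReal hnn]

theorem Filter.Tendsto.rpow_atTop {ι : Type*} {l : Filter ι} {b c : ι → ℝ} {c₀ : ℝ}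
    (hb : Tendsto b l atTop) (hc : Tendsto c l (𝓝 c₀)) (hc₀ : 0 < c₀) :
    Tendsto (fun i => b i ^ c i) l atTop := by
  refine (tendsto_exp_atTop.comp ((tendsto_log_atTop.comp hb).atTop_mul_pos hc₀ hc)).congr' ?_
  filter_upwards [hb.eventually_gt_atTop 0] with i hi
  simp [rpow_def_of_pos hi]

theorem tendsto_psi_div_rpow {ι : Type*} {l : Filter ι} {b c : ι → ℝ} {c₀ : ℝ}
    (hb : Tendsto b l atTop) (hc : Tendsto c l (𝓝 c₀)) (hc₀ : -1 < c₀) :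
    Tendsto (fun i => psi (c i) (b i) / b i ^ (c i + 1)) l (𝓝 (1 / (c₀ + 1))) := by
  have hc1 : Tendsto (fun i => c i + 1) l (𝓝 (c₀ + 1)) := hc.add_const 1
  have hpow := hb.rpow_atTop hc1 (by linarith)
  have h : Tendsto (fun i => (1 - (b i ^ (c i + 1))⁻¹) / (c i + 1)) l
      (𝓝 ((1 - 0) / (c₀ + 1))) :=
    (tendsto_const_nhds.sub hpow.inv_tendsto_atTop).div hc1 (by linarith)
  rw [sub_zero] at h
  refine h.congr' ?_
  filter_upwards [hb.eventually_gt_atTop 0, hpow.eventually_gt_atTop 0,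
    hc1.eventually_ne (by linarith : c₀ + 1 ≠ 0)] with i hbi hpos hne
  rw [psi_eq_rpow_sub_one_div (fun h => hne (by rw [h]; ring)) hbi]
  field_simp

theorem tendsto_div_of_le_of_le {ι : Type*} {l : Filter ι} {F ψ g D : ι → ℝ} {C L k : ℝ}
    (hlow : ∀ᶠ i in l, ψ i / k ≤ F i) (hup : ∀ᶠ i in l, F i ≤ C + g i * ψ i / k)
    (hg : Tendsto g l (𝓝 1)) (hψ : Tendsto (fun i => ψ i / D i) l (𝓝 L))
    (hD : Tendsto D l atTop) : Tendsto (fun i => F i / D i) l (𝓝 (L / k)) := by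
  have hup_lim : Tendsto (fun i => C * (D i)⁻¹ + g i * (ψ i / D i / k)) l (𝓝 (L / k)) := by
    simpa using (hD.inv_tendsto_atTop.const_mul C).add (hg.mul (hψ.div_const k))
  refine tendsto_of_tendsto_of_tendsto_of_le_of_le' (hψ.div_const k) hup_lim ?_ ?_
  · filter_upwards [hlow, hD.eventually_gt_atTop 0] with i h hD0
    rw [div_right_comm]
    exact div_le_div_of_nonneg_right h hD0.le
  · filter_upwards [hup, hD.eventually_gt_atTop 0] with i h hD0
    calc F i / D i ≤ (C + g i * ψ i / k) / D i := div_le_div_of_nonneg_right h hD0.le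
      _ = _ := by ring

lemma tendsto_div_one_sub_nhdsLT {τ : ℝ} (hτ : 0 < τ) :
    Tendsto (fun H : ℝ => τ / (1 - H)) (𝓝[<] 1) atTop := by
  have h : Tendsto (fun H : ℝ => 1 - H) (𝓝[<] 1) (𝓝[>] 0) := by
    refine tendsto_nhdsWithin_of_tendsto_nhds_of_eventually_within _ ?_ ?_
    · simpa using ((continuous_sub_left (1 : ℝ)).tendsto 1).mono_left nhdsWithin_le_nhds
    · filter_upwards [self_mem_nhdsWithin] with H hH using sub_pos.2 (show H < 1 from hH)
  simpa [div_eq_mul_inv] using (tendsto_inv_nhdsGT_zero.comp h).const_mul_atTop hτ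

theorem stmt_6 (p τ : ℝ) (hp : -1 < p) (hτ : 0 < τ) :
    Filter.Tendsto
      (fun H : ℝ =>
        (fPH p H 1 (Real.exp (τ / (1 - H)))).toReal /
          Real.exp (τ * (p + 2*H - 1) / (1 - H)))
      (nhdsWithin 1 (Ioo (1/2 : ℝ) 1)) (nhds (1 / (p + 1)^2)) := by
  -- any `H₀ < 1` at which `fPH_lt_top` applies will do
  set H₀ : ℝ := max (3 / 4) ((3 - p) / 4)
  have hH₀ : 1 / 2 < H₀ := lt_max_of_lt_left (by norm_num)
  have hpH₀ : 1 < p + 2 * H₀ := by linarith [le_max_right (3 / 4 : ℝ) ((3 - p) / 4)]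
  have hnear : ∀ᶠ H in 𝓝[Ioo (1 / 2 : ℝ) 1] 1, H₀ < H ∧ H < 1 :=
    ((eventually_gt_nhds (max_lt (by norm_num) (by linarith))).filter_mono
      nhdsWithin_le_nhds).and (eventually_mem_nhdsWithin.mono fun H hH => hH.2)
  have hb1 : ∀ H : ℝ, H < 1 → 1 ≤ exp (τ / (1 - H)) := fun H hH =>
    one_le_exp (div_nonneg hτ.le (sub_nonneg.2 hH.le))
  have hb : Tendsto (fun H : ℝ => exp (τ / (1 - H))) (𝓝[Ioo (1 / 2 : ℝ) 1] 1) atTop :=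
    tendsto_exp_atTop.comp ((tendsto_div_one_sub_nhdsLT hτ).mono_left
      (nhdsWithin_mono _ Ioo_subset_Iio_self))
  have hcont : ∀ f : ℝ → ℝ, Continuous f → Tendsto f (𝓝[Ioo (1 / 2 : ℝ) 1] 1) (𝓝 (f 1)) :=
    fun f hf => (hf.tendsto 1).mono_left nhdsWithin_le_nhds
  have hc := hcont (fun H => p + 2 * H - 2) (by fun_prop)
  have hg := hcont (fun H => (1 - 1 / 2 : ℝ) ^ (2 * H - 2))
    (continuous_const.rpow (by fun_prop) fun _ => Or.inl (by norm_num))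
  have key := tendsto_div_of_le_of_le (k := p + 1) (C := (fPH p H₀ 1 2 + fPH p 1 1 2).toReal)
    (hnear.mono fun H hH =>
      psi_div_le_toReal_fPH hp (by linarith) hH.2.le (by linarith) (hb1 H hH.2))
    (hnear.mono fun H hH => toReal_fPH_le hp hH₀ hpH₀ hH.1.le hH.2.le one_lt_two (hb1 H hH.2))
    (by simpa using hg) (tendsto_psi_div_rpow hb hc (by linarith))
    (hb.rpow_atTop (hc.add_const 1) (by linarith))
  convert key using 2 with H
  · rw [← exp_mul, show τ / (1 - H) * (p + 2 * H - 2 + 1) = τ * (p + 2 * H - 1) / (1 - H) by ring]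
  · rw [show p + 2 * 1 - 2 + 1 = p + 1 by ring, div_div, sq]
end

section
/- Let $I:[0,\infty)\to[0,\infty)$ be non decreasing with $I(T)\le T$ for all $T$ and $\lim_{T\to\infty}I(T)=\infty$. Then $\liminf_{T\to\infty}\frac{I(T)}{I(T/2)^2}=0$; equivalently, there exists a sequence $T_k\to\infty$ with $I(T_k)/I(T_k/2)^2\to 0$. -/
open Filter Set

/-! If `I(T) ≥ ε I(T/2)²` held for all large `T`, then, starting from a point `S` with
`ε I(S) ≥ 2`, the values `ε I(2ᵏ S)` would satisfy `aₖ₊₁ ≥ aₖ²` and hence grow like `2^(2ᵏ)`,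
which is incompatible with `I(T) ≤ T`. -/

theorem two_pow_two_pow_le_of_sq_le_succ {a : ℕ → ℝ} (h0 : 2 ≤ a 0)
    (hsq : ∀ k, a k ^ 2 ≤ a (k + 1)) (k : ℕ) : (2 : ℝ) ^ 2 ^ k ≤ a k := by
  induction k with
  | zero => simpa using h0
  | succ k ih =>
    calc (2 : ℝ) ^ 2 ^ (k + 1) = ((2 : ℝ) ^ 2 ^ k) ^ 2 := by rw [pow_succ, pow_mul]
      _ ≤ a k ^ 2 := by gcongr
      _ ≤ a (k + 1) := hsq k

theorem exists_mul_two_pow_lt_two_pow_two_pow (C : ℝ) :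
    ∃ k : ℕ, C * 2 ^ k < (2 : ℝ) ^ 2 ^ k := by
  obtain ⟨k, hk⟩ := pow_unbounded_of_one_lt C one_lt_two
  refine ⟨k, ?_⟩
  calc C * 2 ^ k < 2 ^ k * 2 ^ k := by gcongr
    _ = 2 ^ (2 * k) := by rw [two_mul, pow_add]
    _ ≤ 2 ^ 2 ^ k := pow_le_pow_right₀ one_le_two (Nat.mul_le_pow (by norm_num) k)

theorem frequently_lt_mul_sq_half {I : ℝ → ℝ} (hle : ∀ᶠ T in atTop, I T ≤ T)
    (hdiv : Tendsto I atTop atTop) {ε : ℝ} (hε : 0 < ε) :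
    ∃ᶠ T in atTop, I T < ε * I (T / 2) ^ 2 := by
  by_contra hcontra
  simp only [not_frequently, not_lt] at hcontra
  obtain ⟨S₀, hS₀⟩ :=
    (hle.and (hcontra.and (hdiv.eventually_ge_atTop (2 / ε)))).exists_forall_of_atTop
  set S := max S₀ 0
  have hS : ∀ k : ℕ, S₀ ≤ 2 ^ k * S := fun k =>
    (le_max_left _ _).trans (le_mul_of_one_le_left (le_max_right _ _) (one_le_pow₀ one_le_two))
  set a : ℕ → ℝ := fun k => ε * I (2 ^ k * S)
  have ha0 : 2 ≤ a 0 := by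
    have := (hS₀ _ (hS 0)).2.2
    rw [div_le_iff₀ hε] at this
    simpa [a, mul_comm] using this
  have hsq : ∀ k, a k ^ 2 ≤ a (k + 1) := fun k => by
    have hhalf : 2 ^ (k + 1) * S / 2 = 2 ^ k * S := by rw [pow_succ]; ring
    have := (hS₀ _ (hS (k + 1))).2.1
    rw [hhalf] at this
    calc a k ^ 2 = ε * (ε * I (2 ^ k * S) ^ 2) := by ring
      _ ≤ a (k + 1) := mul_le_mul_of_nonneg_left this hε.le
  have hbound : ∀ k, a k ≤ ε * S * 2 ^ k := fun k => by
    calc a k ≤ ε * (2 ^ k * S) := mul_le_mul_of_nonneg_left (hS₀ _ (hS k)).1 hε.le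
      _ = ε * S * 2 ^ k := by ring
  obtain ⟨k, hk⟩ := exists_mul_two_pow_lt_two_pow_two_pow (ε * S)
  exact (two_pow_two_pow_le_of_sq_le_succ ha0 hsq k).not_gt (lt_of_le_of_lt (hbound k) hk)

theorem stmt_13_general (I : ℝ → ℝ)
    (hle : ∀ T, 0 ≤ T → I T ≤ T)
    (hdiv : Tendsto I atTop atTop) :
    ∃ T : ℕ → ℝ, Tendsto T atTop atTop ∧
      Tendsto (fun k => I (T k) / (I (T k / 2)) ^ 2) atTop (nhds 0) := by
  have hsmall (k : ℕ) :
      ∃ T : ℝ, I T < 1 / (k + 1) * I (T / 2) ^ 2 ∧ (k : ℝ) ≤ T ∧ 0 ≤ I T := by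
    have hfreq := frequently_lt_mul_sq_half (eventually_atTop.2 ⟨0, hle⟩) hdiv
      (ε := 1 / (k + 1)) (by positivity)
    exact (hfreq.and_eventually
      ((eventually_ge_atTop (k : ℝ)).and (hdiv.eventually_ge_atTop 0))).exists
  choose T hIlt hTk hI0 using hsmall
  refine ⟨T, tendsto_atTop_mono hTk tendsto_natCast_atTop_atTop, ?_⟩
  refine tendsto_of_tendsto_of_tendsto_of_le_of_le tendsto_const_nhds
    tendsto_one_div_add_atTop_nhds_zero_nat (fun k => div_nonneg (hI0 k) (sq_nonneg _))
    fun k => ?_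
  have hpos : 0 < I (T k / 2) ^ 2 :=
    pos_of_mul_pos_right ((hI0 k).trans_lt (hIlt k)) (by positivity)
  exact (div_le_iff₀ hpos).2 (by linarith [hIlt k])

theorem stmt_13 (I : ℝ → ℝ)
    (hmono : MonotoneOn I (Ici 0))
    (hnonneg : ∀ T, 0 ≤ T → 0 ≤ I T)
    (hle : ∀ T, 0 ≤ T → I T ≤ T)
    (hdiv : Tendsto I atTop atTop) :
    ∃ T : ℕ → ℝ, Tendsto T atTop atTop ∧
      Tendsto (fun k => I (T k) / (I (T k / 2)) ^ 2) atTop (nhds 0) :=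
  stmt_13_general I hle hdiv
end

section
/- Let $H\in(1/2,1)$, $p+H>0$, and let $\sigma,\rho$ be as in the non summable setting with $\sigma(\lceil y\rceil)\le C y^p$ for $y\ge1$ and $\rho(\lceil x\rceil-\lceil y\rceil)\le C|x-y|^{2H-2}$. Then there is a constant $C'$ such that for all $u\ge1$ and $\tau\in[0,1]$: $F(ue^\tau,ue^\tau)-F(u,ue^\tau)\le C' u^{2p+2H}\tau$, where $F(\ell_1,\ell_2)=\int_0^{\ell_1}\int_0^{\ell_2}\sigma(\lceil x\rceil)\sigma(\lceil y\rceil)\rho(\lceil x\rceil-\lceil y\rceil)dxdy$. -/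
open MeasureTheory Real Set
open scoped ENNReal

/-- `F(ℓ₁,ℓ₂) = ∫_0^{ℓ₁} ∫_0^{ℓ₂} σ(⌈x⌉) σ(⌈y⌉) ρ(⌈x⌉-⌈y⌉) dx dy`. -/
noncomputable def Fcov (σ : ℕ → ℝ) (ρ : ℤ → ℝ) (ℓ₁ ℓ₂ : ℝ) : ℝ :=
  ∫ x in Ioo (0:ℝ) ℓ₁, ∫ y in Ioo (0:ℝ) ℓ₂,
    σ (⌈x⌉.toNat) * σ (⌈y⌉.toNat) * ρ (⌈x⌉ - ⌈y⌉)

/-!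
With `L = u e^τ` the difference is `∫_u^L G`, where `G x = ∫_0^L f(x, y) dy` is a row integral of
the nonnegative integrand `f`; as `L - u ≤ 2τu`, it suffices that `G x ≲ u^{2p+2H-1}` on
`[u, L]`. The hypotheses give `f(x, y) ≲ σ(⌈x⌉) max(1, y)^p max(1, |x - y|)^{2H-2}`. For
`y ≤ u/2` the kernel factor is `≲ u^{2H-2}` and `∫_0^u max(1, y)^p ≲ u^{p+1}` since `p > -1`;
for `y ≥ u/2` the weight is `≲ u^p` and `∫_{-eu}^{eu} max(1, |t|)^{2H-2} ≲ u^{2H-1}` since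
`2H - 2 > -1`.
-/

lemma rpow_le_max_mul_rpow {a b u y : ℝ} (p : ℝ) (ha : 0 < a) (hu : 0 < u)
    (hay : a * u ≤ y) (hyb : y ≤ b * u) : y ^ p ≤ max (a ^ p) (b ^ p) * u ^ p := by
  have hau : a ≤ y / u := by rwa [le_div_iff₀ hu]
  rw [← div_mul_cancel₀ y hu.ne', mul_rpow (ha.le.trans hau) hu.le]
  gcongr
  rcases le_total 0 p with hp | hp
  · exact le_max_of_le_right (rpow_le_rpow (ha.le.trans hau) ((div_le_iff₀ hu).2 hyb) hp)
  · exact le_max_of_le_left (rpow_le_rpow_of_nonpos ha hau hp)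

lemma continuous_max_one_rpow (q : ℝ) : Continuous fun t : ℝ => max 1 t ^ q :=
  (continuous_const.max continuous_id).rpow_const fun t =>
    Or.inl (zero_lt_one.trans_le (le_max_left 1 t)).ne'

lemma continuous_max_one_abs_sub_rpow (q x : ℝ) : Continuous fun y : ℝ => max 1 |x - y| ^ q :=
  (continuous_max_one_rpow q).comp (continuous_const.sub continuous_id).abs

lemma integral_max_one_rpow_le {a q : ℝ} (ha : 1 ≤ a) (hq : -1 < q) :
    ∫ t in (0:ℝ)..a, max 1 t ^ q ≤ (1 + (q + 1)⁻¹) * a ^ (q + 1) := by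
  have hint := (continuous_max_one_rpow q).intervalIntegrable (μ := volume)
  have h01 : ∫ t in (0:ℝ)..1, max 1 t ^ q = 1 := by
    rw [intervalIntegral.integral_congr (g := fun _ => (1:ℝ)) fun t ht => by
      rw [uIcc_of_le zero_le_one] at ht
      simp [max_eq_left ht.2]]
    simp
  have h1a : ∫ t in (1:ℝ)..a, max 1 t ^ q = (a ^ (q + 1) - 1) / (q + 1) := by
    rw [intervalIntegral.integral_congr (g := fun t => t ^ q) fun t ht => by
      rw [uIcc_of_le ha] at ht
      simp [max_eq_right ht.1], integral_rpow (Or.inl hq), one_rpow]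
  have hq1 : 0 < q + 1 := by linarith
  have ha1 : 1 ≤ a ^ (q + 1) := one_le_rpow ha hq1.le
  rw [← intervalIntegral.integral_add_adjacent_intervals (hint 0 1) (hint 1 a), h01, h1a,
    sub_div, add_mul, one_mul, ← div_eq_inv_mul]
  have : 0 ≤ 1 / (q + 1) := by positivity
  linarith [div_le_div_of_nonneg_right ha1 hq1.le]

lemma integral_max_one_abs_rpow_le {a q : ℝ} (ha : 1 ≤ a) (hq : -1 < q) :
    ∫ t in -a..a, max 1 |t| ^ q ≤ 2 * (1 + (q + 1)⁻¹) * a ^ (q + 1) := by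
  have hint : ∀ b c, IntervalIntegrable (fun t : ℝ => max 1 |t| ^ q) volume b c :=
    ((continuous_max_one_rpow q).comp continuous_abs).intervalIntegrable
  have hpos : ∫ t in (0:ℝ)..a, max 1 |t| ^ q = ∫ t in (0:ℝ)..a, max 1 t ^ q :=
    intervalIntegral.integral_congr fun t ht => by
      rw [uIcc_of_le (by linarith)] at ht
      simp only [abs_of_nonneg ht.1]
  have hneg : ∫ t in -a..0, max 1 |t| ^ q = ∫ t in (0:ℝ)..a, max 1 |t| ^ q := by
    simpa using
      (intervalIntegral.integral_comp_neg (a := 0) (b := a) fun t => max 1 |t| ^ q).symm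
  rw [← intervalIntegral.integral_add_adjacent_intervals (hint (-a) 0) (hint 0 a), hneg, hpos]
  linarith [integral_max_one_rpow_le ha hq]

noncomputable def powKernel (p q x y : ℝ) : ℝ := max 1 y ^ p * max 1 |x - y| ^ q

lemma continuous_powKernel (p q x : ℝ) : Continuous (powKernel p q x) :=
  (continuous_max_one_rpow p).mul (continuous_max_one_abs_sub_rpow q x)

lemma integral_powKernel_zero_half_le {p q u x : ℝ} (hp : -1 < p) (hq : q ≤ 0) (hu : 1 ≤ u)
    (hux : u ≤ x) :
    ∫ y in (0:ℝ)..u / 2, powKernel p q x y ≤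
      (1 + (p + 1)⁻¹) / 2 ^ q * u ^ (p + q + 1) := by
  have hu0 : 0 < u := by linarith
  have hint := (continuous_max_one_rpow p).intervalIntegrable (μ := volume)
  calc ∫ y in (0:ℝ)..u / 2, powKernel p q x y
      ≤ ∫ y in (0:ℝ)..u / 2, max 1 y ^ p * (u / 2) ^ q := by
        refine intervalIntegral.integral_mono_on (by positivity)
          ((continuous_powKernel p q x).intervalIntegrable _ _)
          ((hint 0 (u / 2)).mul_const _) fun y hy => ?_
        have hfar : u / 2 ≤ max 1 |x - y| :=
          le_max_of_le_right (by linarith [hy.2, le_abs_self (x - y)])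
        exact mul_le_mul_of_nonneg_left (rpow_le_rpow_of_nonpos (by positivity) hfar hq)
          (by positivity)
    _ = (∫ y in (0:ℝ)..u / 2, max 1 y ^ p) * (u / 2) ^ q :=
        intervalIntegral.integral_mul_const _ _
    _ ≤ (∫ y in (0:ℝ)..u, max 1 y ^ p) * (u / 2) ^ q := by
        gcongr
        exact intervalIntegral.integral_mono_interval le_rfl (by positivity) (by linarith)
          (ae_of_all _ fun y => by positivity) (hint 0 u)
    _ ≤ (1 + (p + 1)⁻¹) * u ^ (p + 1) * (u / 2) ^ q := by
        gcongr
        exact integral_max_one_rpow_le hu hp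
    _ = (1 + (p + 1)⁻¹) / 2 ^ q * u ^ (p + q + 1) := by
        rw [show p + q + 1 = (p + 1) + q by ring, rpow_add hu0 (p + 1) q,
          div_rpow hu0.le zero_le_two]
        ring

lemma integral_powKernel_half_le {p q c u x L : ℝ} (hq : -1 < q) (hc : 1 ≤ c) (hu : 1 ≤ u)
    (hux : u ≤ x) (hxL : x ≤ L) (hLc : L ≤ c * u) :
    ∫ y in u / 2..L, powKernel p q x y ≤
      max ((1 / 2) ^ p) (c ^ p) * (2 * (1 + (q + 1)⁻¹) * c ^ (q + 1)) * u ^ (p + q + 1) := by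
  have hu0 : 0 < u := by linarith
  have hcu : 1 ≤ c * u := one_le_mul_of_one_le_of_one_le hc hu
  set M := max ((1 / 2) ^ p) (c ^ p)
  calc ∫ y in u / 2..L, powKernel p q x y
      ≤ ∫ y in u / 2..L, M * u ^ p * max 1 |x - y| ^ q := by
        refine intervalIntegral.integral_mono_on (by linarith)
          ((continuous_powKernel p q x).intervalIntegrable _ _)
          ((continuous_const.mul (continuous_max_one_abs_sub_rpow q x)).intervalIntegrable _ _)
          fun y hy => mul_le_mul_of_nonneg_right ?_ (by positivity)
        refine rpow_le_max_mul_rpow p one_half_pos hu0 ?_ (max_le hcu (by linarith [hy.2]))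
        exact le_max_of_le_right (by linarith [hy.1])
    _ = M * u ^ p * ∫ t in x - L..x - u / 2, max 1 |t| ^ q := by
        rw [intervalIntegral.integral_const_mul,
          intervalIntegral.integral_comp_sub_left (fun t => max 1 |t| ^ q) x]
    _ ≤ M * u ^ p * ∫ t in -(c * u)..c * u, max 1 |t| ^ q := by
        gcongr
        exact intervalIntegral.integral_mono_interval (by linarith) (by linarith) (by linarith)
          (ae_of_all _ fun t => by positivity)
          (((continuous_max_one_rpow q).comp continuous_abs).intervalIntegrable _ _)
    _ ≤ M * u ^ p * (2 * (1 + (q + 1)⁻¹) * (c * u) ^ (q + 1)) := by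
        gcongr
        exact integral_max_one_abs_rpow_le hcu hq
    _ = M * (2 * (1 + (q + 1)⁻¹) * c ^ (q + 1)) * u ^ (p + q + 1) := by
        rw [mul_rpow (by linarith) hu0.le, add_assoc, rpow_add hu0 p (q + 1)]
        ring

lemma exists_integral_powKernel_le {p q c : ℝ} (hp : -1 < p) (hq : -1 < q) (hq0 : q ≤ 0)
    (hc : 1 ≤ c) :
    ∃ K, 0 ≤ K ∧ ∀ u x L, 1 ≤ u → u ≤ x → x ≤ L → L ≤ c * u →
      ∫ y in (0:ℝ)..L, powKernel p q x y ≤ K * u ^ (p + q + 1) := by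
  have hp1 : 0 ≤ 1 + (p + 1)⁻¹ := by have := inv_pos.2 (by linarith : 0 < p + 1); linarith
  have hq1 : 0 ≤ 1 + (q + 1)⁻¹ := by have := inv_pos.2 (by linarith : 0 < q + 1); linarith
  refine ⟨(1 + (p + 1)⁻¹) / 2 ^ q +
      max ((1 / 2) ^ p) (c ^ p) * (2 * (1 + (q + 1)⁻¹) * c ^ (q + 1)),
    by positivity, fun u x L hu hux hxL hLc => ?_⟩
  have hint := (continuous_powKernel p q x).intervalIntegrable (μ := volume)
  rw [← intervalIntegral.integral_add_adjacent_intervals (hint 0 (u / 2)) (hint (u / 2) L),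
    add_mul]
  exact add_le_add (integral_powKernel_zero_half_le hp hq0 hu hux)
    (integral_powKernel_half_le hq hc hu hux hxL hLc)

lemma sigma_ceil_le {σ : ℕ → ℝ} {C p : ℝ}
    (hσ : ∀ y : ℝ, 1 ≤ y → σ (⌈y⌉.toNat) ≤ C * y ^ p) {y : ℝ} (hy : 0 < y) :
    σ (⌈y⌉.toNat) ≤ C * max 1 y ^ p := by
  rcases le_total y 1 with hy1 | hy1
  · have hceil : ⌈y⌉ = ⌈(1:ℝ)⌉ := by
      rw [Int.ceil_one, Int.ceil_eq_iff]
      exact ⟨by norm_num [hy], by exact_mod_cast hy1⟩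
    simpa [hceil, max_eq_left hy1] using hσ 1 le_rfl
  · rw [max_eq_right hy1]
    exact hσ y hy1

lemma rho_ceil_sub_le {ρ : ℤ → ℝ} {C q : ℝ} (hC : 0 ≤ C) (hq : q ≤ 0)
    (hρ : ∀ x y : ℝ, x ≠ y → ρ (⌈x⌉ - ⌈y⌉) ≤ C * |x - y| ^ q) (x y : ℝ) :
    ρ (⌈x⌉ - ⌈y⌉) ≤ C * 2 ^ (-q) * max 1 |x - y| ^ q := by
  -- `k = ⌈x⌉ - ⌈y⌉` is also `⌈k⌉ - ⌈0⌉`, or `⌈1⌉ - ⌈1/2⌉` when `k = 0`; and `|x - y| < |k| + 1`.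
  obtain ⟨x', y', hne, hidx, hdist⟩ : ∃ x' y' : ℝ, x' ≠ y' ∧ ⌈x'⌉ - ⌈y'⌉ = ⌈x⌉ - ⌈y⌉ ∧
      max 1 |x - y| / 2 ≤ |x' - y'| := by
    set k := ⌈x⌉ - ⌈y⌉
    have hxy : |x - y| < |(k : ℝ)| + 1 := by
      have : |x - y - k| < 1 := by
        rw [abs_lt]
        push_cast [k]
        constructor <;> linarith [Int.le_ceil x, Int.ceil_lt_add_one x, Int.le_ceil y,
          Int.ceil_lt_add_one y]
      linarith [abs_sub_abs_le_abs_sub (x - y) k]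
    rcases eq_or_ne k 0 with hk | hk
    · rw [hk, Int.cast_zero, abs_zero, zero_add] at hxy
      exact ⟨1, 1 / 2, by norm_num, by norm_num [hk], by norm_num [max_eq_left hxy.le]⟩
    · have hk1 : (1:ℝ) ≤ |(k : ℝ)| := by exact_mod_cast Int.one_le_abs hk
      refine ⟨k, 0, by exact_mod_cast hk, by simp, ?_⟩
      rw [sub_zero, div_le_iff₀ two_pos]
      exact max_le (by linarith) (by linarith)
  calc ρ (⌈x⌉ - ⌈y⌉) = ρ (⌈x'⌉ - ⌈y'⌉) := by rw [hidx]
    _ ≤ C * |x' - y'| ^ q := hρ x' y' hne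
    _ ≤ C * (max 1 |x - y| / 2) ^ q :=
        mul_le_mul_of_nonneg_left (rpow_le_rpow_of_nonpos (by positivity) hdist hq) hC
    _ = C * 2 ^ (-q) * max 1 |x - y| ^ q := by
        rw [div_rpow (by positivity) zero_le_two, rpow_neg zero_le_two]
        ring

noncomputable def covKernel (σ : ℕ → ℝ) (ρ : ℤ → ℝ) (x y : ℝ) : ℝ :=
  σ (⌈x⌉.toNat) * σ (⌈y⌉.toNat) * ρ (⌈x⌉ - ⌈y⌉)

section covKernel

variable {σ : ℕ → ℝ} {ρ : ℤ → ℝ}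

lemma covKernel_nonneg (hσ0 : ∀ i, 0 ≤ σ i) (hρ0 : ∀ k, 0 ≤ ρ k) (x y : ℝ) :
    0 ≤ covKernel σ ρ x y :=
  mul_nonneg (mul_nonneg (hσ0 _) (hσ0 _)) (hρ0 _)

lemma measurable_covKernel : Measurable (Function.uncurry (covKernel σ ρ)) := by
  unfold covKernel Function.uncurry
  fun_prop

lemma integrableOn_integral_covKernel {C D p q : ℝ} (hσ0 : ∀ i, 0 ≤ σ i) (hρ0 : ∀ k, 0 ≤ ρ k)
    (hσ : ∀ y : ℝ, 0 < y → σ (⌈y⌉.toNat) ≤ C * max 1 y ^ p)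
    (hρ : ∀ x y : ℝ, ρ (⌈x⌉ - ⌈y⌉) ≤ D * max 1 |x - y| ^ q)
    (hC : 0 ≤ C) (hD : 0 ≤ D) (hq : q ≤ 0) (ℓ : ℝ) :
    IntegrableOn (fun x => ∫ y in Ioo 0 ℓ, covKernel σ ρ x y) (Ioo 0 ℓ) := by
  set M := C * max 1 ℓ ^ |p|
  have hσM : ∀ y ∈ Ioo 0 ℓ, σ (⌈y⌉.toNat) ≤ M := fun y hy => by
    refine (hσ y hy.1).trans (mul_le_mul_of_nonneg_left ?_ hC)
    calc max 1 y ^ p ≤ max 1 y ^ |p| :=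
          rpow_le_rpow_of_exponent_le (le_max_left _ _) (le_abs_self p)
      _ ≤ max 1 ℓ ^ |p| := by gcongr; exact hy.2.le
  have hρD : ∀ x y : ℝ, ρ (⌈x⌉ - ⌈y⌉) ≤ D := fun x y => (hρ x y).trans
    (mul_le_of_le_one_right hD (rpow_le_one_of_one_le_of_nonpos (le_max_left _ _) hq))
  have hint : Integrable (Function.uncurry (covKernel σ ρ))
      ((volume.restrict (Ioo 0 ℓ)).prod (volume.restrict (Ioo 0 ℓ))) := by
    refine Integrable.of_bound measurable_covKernel.aestronglyMeasurable (M * M * D) ?_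
    rw [Measure.prod_restrict]
    refine ae_restrict_of_forall_mem (measurableSet_Ioo.prod measurableSet_Ioo) fun z hz => ?_
    rw [Function.uncurry_def, Real.norm_of_nonneg (covKernel_nonneg hσ0 hρ0 _ _)]
    exact mul_le_mul (mul_le_mul (hσM _ hz.1) (hσM _ hz.2) (hσ0 _) ((hσ0 _).trans (hσM _ hz.1)))
      (hρD _ _) (hρ0 _) (by positivity)
  exact hint.integral_prod_left

lemma Fcov_sub_Fcov_le {a u ℓ K : ℝ} (hu : 0 ≤ u) (hua : u ≤ a)
    (hint : IntegrableOn (fun x => ∫ y in Ioo 0 ℓ, covKernel σ ρ x y) (Ioo 0 a))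
    (hK : ∀ x ∈ Icc u a, ∫ y in Ioo 0 ℓ, covKernel σ ρ x y ≤ K) :
    Fcov σ ρ a ℓ - Fcov σ ρ u ℓ ≤ K * (a - u) := by
  have hF : ∀ b, 0 ≤ b →
      Fcov σ ρ b ℓ = ∫ x in (0:ℝ)..b, ∫ y in Ioo 0 ℓ, covKernel σ ρ x y := fun b hb => by
    rw [intervalIntegral.integral_of_le hb, integral_Ioc_eq_integral_Ioo]
    rfl
  have hii : ∀ b c, 0 ≤ b → b ≤ c → c ≤ a →
      IntervalIntegrable (fun x => ∫ y in Ioo 0 ℓ, covKernel σ ρ x y) volume b c :=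
    fun b c hb hbc hca => (intervalIntegrable_iff_integrableOn_Ioo_of_le hbc).2
      (hint.mono_set (Ioo_subset_Ioo hb hca))
  have ha : 0 ≤ a := hu.trans hua
  rw [hF a ha, hF u hu, intervalIntegral.integral_interval_sub_left (hii 0 a le_rfl ha le_rfl)
    (hii 0 u le_rfl hu hua), mul_comm, ← smul_eq_mul, ← intervalIntegral.integral_const]
  exact intervalIntegral.integral_mono_on hua (hii u a hu hua le_rfl) intervalIntegrable_const hK

lemma integral_covKernel_le {C D p q : ℝ} (hσ0 : ∀ i, 0 ≤ σ i) (hρ0 : ∀ k, 0 ≤ ρ k)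
    (hσ : ∀ y : ℝ, 0 < y → σ (⌈y⌉.toNat) ≤ C * max 1 y ^ p)
    (hρ : ∀ x y : ℝ, ρ (⌈x⌉ - ⌈y⌉) ≤ D * max 1 |x - y| ^ q) (x : ℝ) {L : ℝ} (hL : 0 ≤ L) :
    ∫ y in Ioo 0 L, covKernel σ ρ x y ≤
      σ (⌈x⌉.toNat) * (C * D) * ∫ y in (0:ℝ)..L, powKernel p q x y := by
  rw [intervalIntegral.integral_of_le hL, integral_Ioc_eq_integral_Ioo, ← integral_const_mul]
  refine integral_mono_of_nonneg (ae_of_all _ (covKernel_nonneg hσ0 hρ0 x))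
    (((continuous_powKernel p q x).integrableOn_Icc.mono_set Ioo_subset_Icc_self).const_mul _)
    (ae_restrict_of_forall_mem measurableSet_Ioo fun y hy => ?_)
  calc covKernel σ ρ x y ≤ σ (⌈x⌉.toNat) * (C * max 1 y ^ p) * (D * max 1 |x - y| ^ q) :=
        mul_le_mul (mul_le_mul_of_nonneg_left (hσ y hy.1) (hσ0 _)) (hρ x y) (hρ0 _)
          (mul_nonneg (hσ0 _) ((hσ0 _).trans (hσ y hy.1)))
    _ = σ (⌈x⌉.toNat) * (C * D) * powKernel p q x y := by
        unfold powKernel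
        ring

lemma exists_integral_covKernel_le {C D p q c : ℝ} (hσ0 : ∀ i, 0 ≤ σ i) (hρ0 : ∀ k, 0 ≤ ρ k)
    (hσ : ∀ y : ℝ, 0 < y → σ (⌈y⌉.toNat) ≤ C * max 1 y ^ p)
    (hρ : ∀ x y : ℝ, ρ (⌈x⌉ - ⌈y⌉) ≤ D * max 1 |x - y| ^ q)
    (hC : 0 ≤ C) (hD : 0 ≤ D) (hp : -1 < p) (hq : -1 < q) (hq0 : q ≤ 0) (hc : 1 ≤ c) :
    ∃ B, 0 ≤ B ∧ ∀ u x L, 1 ≤ u → u ≤ x → x ≤ L → L ≤ c * u →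
      ∫ y in Ioo 0 L, covKernel σ ρ x y ≤ B * u ^ (2 * p + q + 1) := by
  obtain ⟨K, hK0, hK⟩ := exists_integral_powKernel_le hp hq hq0 hc
  set M := max ((1:ℝ) ^ p) (c ^ p)
  have hM : 0 ≤ M := le_max_of_le_left (by positivity)
  refine ⟨C * M * (C * D) * K, by positivity, fun u x L hu hux hxL hLc => ?_⟩
  have hu0 : 0 < u := by linarith
  have hσx : σ (⌈x⌉.toNat) ≤ C * M * u ^ p := by
    calc σ (⌈x⌉.toNat) ≤ C * max 1 x ^ p := hσ x (by linarith)
      _ ≤ C * (M * u ^ p) := by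
        rw [max_eq_right (hu.trans hux)]
        exact mul_le_mul_of_nonneg_left
          (rpow_le_max_mul_rpow p one_pos hu0 (by linarith) (by linarith)) hC
      _ = C * M * u ^ p := by ring
  calc ∫ y in Ioo 0 L, covKernel σ ρ x y
      ≤ σ (⌈x⌉.toNat) * (C * D) * ∫ y in (0:ℝ)..L, powKernel p q x y :=
        integral_covKernel_le hσ0 hρ0 hσ hρ x (by linarith)
    _ ≤ C * M * u ^ p * (C * D) * (K * u ^ (p + q + 1)) :=
        mul_le_mul (mul_le_mul_of_nonneg_right hσx (by positivity)) (hK u x L hu hux hxL hLc)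
          (intervalIntegral.integral_nonneg (by linarith) fun y _ => by
            unfold powKernel
            positivity)
          (by positivity)
    _ = C * M * (C * D) * K * u ^ (2 * p + q + 1) := by
        rw [show 2 * p + q + 1 = p + (p + q + 1) by ring, rpow_add hu0 p (p + q + 1)]
        ring

end covKernel

theorem stmt_16_general (p H : ℝ) (hH1 : 1/2 < H) (hH2 : H < 1) (hpH : 0 < p + H)
    (C : ℝ) (hC : 0 < C) (σ : ℕ → ℝ) (ρ : ℤ → ℝ)
    (hσpos : ∀ i, 0 < σ i)
    (hρnonneg : ∀ i : ℤ, 0 ≤ ρ i)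
    (hσbound : ∀ y : ℝ, 1 ≤ y → σ (⌈y⌉.toNat) ≤ C * y ^ p)
    (hρbound : ∀ x y : ℝ, x ≠ y → ρ (⌈x⌉ - ⌈y⌉) ≤ C * |x - y| ^ (2*H - 2)) :
    ∃ C' : ℝ, ∀ u : ℝ, 1 ≤ u → ∀ τ : ℝ, 0 ≤ τ → τ ≤ 1 →
      Fcov σ ρ (u * Real.exp τ) (u * Real.exp τ) - Fcov σ ρ u (u * Real.exp τ)
        ≤ C' * u ^ (2*p + 2*H) * τ := by
  have hσ0 : ∀ i, 0 ≤ σ i := fun i => (hσpos i).le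
  have hσ : ∀ y : ℝ, 0 < y → σ (⌈y⌉.toNat) ≤ C * max 1 y ^ p :=
    fun y hy => sigma_ceil_le hσbound hy
  have hq0 : 2 * H - 2 ≤ 0 := by linarith
  have hρ := rho_ceil_sub_le hC.le hq0 hρbound
  have hD : 0 ≤ C * 2 ^ (-(2 * H - 2)) := by positivity
  obtain ⟨B, hB0, hB⟩ := exists_integral_covKernel_le hσ0 hρnonneg hσ hρ hC.le hD
    (by linarith) (by linarith) hq0 (one_le_exp zero_le_one)
  refine ⟨2 * B, fun u hu τ hτ0 hτ1 => ?_⟩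
  set L := u * exp τ
  have huL : u ≤ L := le_mul_of_one_le_right (by linarith) (one_le_exp hτ0)
  have hLe : L ≤ exp 1 * u := by
    rw [mul_comm (exp 1)]
    exact mul_le_mul_of_nonneg_left (exp_le_exp.2 hτ1) (by linarith)
  have hLu : L - u ≤ 2 * τ * u := by
    have := (abs_le.1 (abs_exp_sub_one_le (abs_le.2 ⟨by linarith, hτ1⟩))).2
    rw [abs_of_nonneg hτ0] at this
    nlinarith
  calc Fcov σ ρ L L - Fcov σ ρ u L
      ≤ B * u ^ (2 * p + (2 * H - 2) + 1) * (L - u) :=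
        Fcov_sub_Fcov_le (by linarith) huL
          (integrableOn_integral_covKernel hσ0 hρnonneg hσ hρ hC.le hD hq0 L)
          fun x hx => hB u x L hu hx.1 hx.2 hLe
    _ ≤ B * u ^ (2 * p + (2 * H - 2) + 1) * (2 * τ * u) := by gcongr
    _ = 2 * B * u ^ (2 * p + 2 * H) * τ := by
        rw [show 2 * p + 2 * H = 2 * p + (2 * H - 2) + 1 + 1 by ring,
          rpow_add_one (by linarith) (2 * p + (2 * H - 2) + 1)]
        ring

theorem stmt_16 (p H : ℝ) (hH1 : 1/2 < H) (hH2 : H < 1) (hpH : 0 < p + H)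
    (C : ℝ) (hC : 0 < C) (σ : ℕ → ℝ) (ρ : ℤ → ℝ)
    (hσpos : ∀ i, 0 < σ i)
    (hρnonneg : ∀ i : ℤ, 0 ≤ ρ i) (hρeven : ∀ i : ℤ, ρ (-i) = ρ i)
    (hσbound : ∀ y : ℝ, 1 ≤ y → σ (⌈y⌉.toNat) ≤ C * y ^ p)
    (hρbound : ∀ x y : ℝ, x ≠ y → ρ (⌈x⌉ - ⌈y⌉) ≤ C * |x - y| ^ (2*H - 2)) :
    ∃ C' : ℝ, ∀ u : ℝ, 1 ≤ u → ∀ τ : ℝ, 0 ≤ τ → τ ≤ 1 →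
      Fcov σ ρ (u * Real.exp τ) (u * Real.exp τ) - Fcov σ ρ u (u * Real.exp τ)
        ≤ C' * u ^ (2*p + 2*H) * τ :=
  stmt_16_general p H hH1 hH2 hpH C hC σ ρ hσpos hρnonneg hσbound hρbound
end

section
/- Let $\rho:\mathbb{Z}\to[0,\infty)$ be even with $\rho(0)=1$ and $\sum_{i\ge0}\rho(i)<\infty$, and let $\sigma:(0,\infty)\to(0,\infty)$ be arbitrary with $s(t)^2:=\int_0^t\sigma(\lceil x\rceil)^2dx$ and inverse $w$ of $s$. Then for all $u>0$ and $b\ge1$: $\int_{w(u)}^{w(bu)}\int_0^{w(bu)}\sigma(\lceil x\rceil)\sigma(\lceil y\rceil)\rho(\lceil x\rceil-\lceil y\rceil)\,dy\,dx\le C(\rho)\, b u^2\sqrt{b^2-1}$ for a constant $C(\rho)$ depending only on $\rho$. -/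
open MeasureTheory Real Set
open scoped ENNReal

/-!
Cauchy–Schwarz for the measure with density `ρ(⌈x⌉ - ⌈y⌉)` bounds the double integral by the
geometric mean of `∫ σ(⌈x⌉)² (∫ ρ(⌈x⌉ - ⌈y⌉) dy) dx` and its mirror image. Each inner integral is
at most `∑_{j ∈ ℤ} ρ j`, since a unit interval carries mass at most one for each value of the
ceiling, and the remaining integrals of `σ(⌈x⌉)²` are `s(w(bu))² - s(w(u))² = b²u² - u²` and
`s(w(bu))² = b²u²`. So `C = ∑_{j ∈ ℤ} ρ j` works; it is finite because `ρ` is even.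
-/

theorem lintegral_comp_ceil_le_tsum (f : ℤ → ℝ≥0∞) (s : Set ℝ) :
    ∫⁻ t in s, f ⌈t⌉ ≤ ∑' k, f k :=
  calc ∫⁻ t in s, f ⌈t⌉ ≤ ∫⁻ t, f ⌈t⌉ := setLIntegral_le_lintegral s _
    _ = ∫⁻ k, f k ∂(volume.map Int.ceil) :=
      (lintegral_map .of_discrete Int.measurable_ceil).symm
    _ = ∑' k, f k * volume.map Int.ceil {k} := lintegral_countable' f
    _ ≤ ∑' k, f k := ENNReal.tsum_le_tsum fun k => by
      rw [Measure.map_apply Int.measurable_ceil (measurableSet_singleton k),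
        Int.preimage_ceil_singleton, Real.volume_Ioc, sub_sub_cancel, ENNReal.ofReal_one, mul_one]

theorem lintegral_lintegral_mul_mul_le {α β : Type*} [MeasurableSpace α] [MeasurableSpace β]
    {μ : Measure α} {ν : Measure β} [SFinite μ] [SFinite ν] {f : α → ℝ≥0∞} {g : β → ℝ≥0∞}
    {K : α → β → ℝ≥0∞} (hf : Measurable f) (hg : Measurable g)
    (hK : Measurable (Function.uncurry K))
    {A : ℝ≥0∞} (hK₁ : ∀ x, ∫⁻ y, K x y ∂ν ≤ A) (hK₂ : ∀ y, ∫⁻ x, K x y ∂μ ≤ A) :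
    ∫⁻ x, ∫⁻ y, f x * g y * K x y ∂ν ∂μ ≤
      A * ((∫⁻ x, f x ^ 2 ∂μ) ^ (1 / 2 : ℝ) * (∫⁻ y, g y ^ 2 ∂ν) ^ (1 / 2 : ℝ)) := by
  -- Hölder's inequality for the measure with density `K` on `μ × ν`
  set ξ := (μ.prod ν).withDensity (Function.uncurry K)
  have hξ : ∀ F : α × β → ℝ≥0∞, Measurable F →
      ∫⁻ p, F p ∂ξ = ∫⁻ x, ∫⁻ y, K x y * F (x, y) ∂ν ∂μ := fun F hF => by
    rw [lintegral_withDensity_eq_lintegral_mul _ hK hF, lintegral_prod _ (hK.mul hF).aemeasurable]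
    rfl
  have hξ' : ∀ F : α × β → ℝ≥0∞, Measurable F →
      ∫⁻ p, F p ∂ξ = ∫⁻ y, ∫⁻ x, K x y * F (x, y) ∂μ ∂ν := fun F hF => by
    rw [lintegral_withDensity_eq_lintegral_mul _ hK hF,
      lintegral_prod_symm _ (hK.mul hF).aemeasurable]
    rfl
  have hf₂ : ∫⁻ p, f p.1 ^ 2 ∂ξ ≤ A * ∫⁻ x, f x ^ 2 ∂μ := by
    rw [hξ (fun p => f p.1 ^ 2) (by fun_prop), ← lintegral_const_mul A (hf.pow_const 2)]
    refine lintegral_mono fun x => ?_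
    dsimp only
    rw [lintegral_mul_const _ hK.of_uncurry_left]
    exact mul_le_mul_left (hK₁ x) _
  have hg₂ : ∫⁻ p, g p.2 ^ 2 ∂ξ ≤ A * ∫⁻ y, g y ^ 2 ∂ν := by
    rw [hξ' (fun p => g p.2 ^ 2) (by fun_prop), ← lintegral_const_mul A (hg.pow_const 2)]
    refine lintegral_mono fun y => ?_
    dsimp only
    rw [lintegral_mul_const _ hK.of_uncurry_right]
    exact mul_le_mul_left (hK₂ y) _
  calc ∫⁻ x, ∫⁻ y, f x * g y * K x y ∂ν ∂μ = ∫⁻ p, f p.1 * g p.2 ∂ξ := by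
        rw [hξ (fun p => f p.1 * g p.2) (by fun_prop)]
        exact lintegral_congr fun x => lintegral_congr fun y => mul_comm _ _
    _ ≤ (∫⁻ p, f p.1 ^ (2 : ℝ) ∂ξ) ^ (1 / 2 : ℝ) * (∫⁻ p, g p.2 ^ (2 : ℝ) ∂ξ) ^ (1 / 2 : ℝ) :=
      ENNReal.lintegral_mul_le_Lp_mul_Lq ξ .two_two (hf.comp measurable_fst).aemeasurable
        (hg.comp measurable_snd).aemeasurable
    _ ≤ (A * ∫⁻ x, f x ^ 2 ∂μ) ^ (1 / 2 : ℝ) * (A * ∫⁻ y, g y ^ 2 ∂ν) ^ (1 / 2 : ℝ) := by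
      simp only [ENNReal.rpow_two]
      gcongr
    _ = A * ((∫⁻ x, f x ^ 2 ∂μ) ^ (1 / 2 : ℝ) * (∫⁻ y, g y ^ 2 ∂ν) ^ (1 / 2 : ℝ)) := by
      rw [ENNReal.mul_rpow_of_nonneg _ _ (by norm_num),
        ENNReal.mul_rpow_of_nonneg _ _ (by norm_num),
        mul_mul_mul_comm, ← ENNReal.rpow_add_of_nonneg _ _ (by norm_num) (by norm_num)]
      norm_num

theorem setLIntegral_Ioo_ofReal_eq_sub {F : ℝ → ℝ} (hF₀ : ∀ x, 0 ≤ F x) {a c : ℝ} (ha : 0 ≤ a)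
    (hac : a ≤ c) (hF : IntervalIntegrable F volume 0 c) :
    ∫⁻ x in Ioo a c, ENNReal.ofReal (F x) =
      ENNReal.ofReal ((∫ x in 0..c, F x) - ∫ x in 0..a, F x) := by
  have hF_a : IntervalIntegrable F volume 0 a := hF.mono_set <| by
    rw [uIcc_of_le ha, uIcc_of_le (ha.trans hac)]
    exact Icc_subset_Icc_right hac
  rw [intervalIntegral.integral_interval_sub_left hF hF_a, intervalIntegral.integral_of_le hac,
    integral_Ioc_eq_integral_Ioo, ofReal_integral_eq_lintegral_ofReal
      ((hF_a.symm.trans hF).1.mono_set Ioo_subset_Ioc_self) (.of_forall hF₀)]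

theorem setLIntegral_setLIntegral_ceil_le (a r : ℤ → ℝ≥0∞) (s t : Set ℝ) :
    ∫⁻ x in s, ∫⁻ y in t, a ⌈x⌉ * a ⌈y⌉ * r (⌈x⌉ - ⌈y⌉) ≤
      (∑' j, r j) *
        ((∫⁻ x in s, a ⌈x⌉ ^ 2) ^ (1 / 2 : ℝ) * (∫⁻ y in t, a ⌈y⌉ ^ 2) ^ (1 / 2 : ℝ)) := by
  have ha : Measurable fun x : ℝ => a ⌈x⌉ := Measurable.of_discrete.comp Int.measurable_ceil
  have hr : Measurable fun p : ℝ × ℝ => r (⌈p.1⌉ - ⌈p.2⌉) :=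
    (Measurable.of_discrete (f := fun q : ℤ × ℤ => r (q.1 - q.2))).comp
      ((Int.measurable_ceil.comp measurable_fst).prodMk (Int.measurable_ceil.comp measurable_snd))
  refine lintegral_lintegral_mul_mul_le (K := fun x y => r (⌈x⌉ - ⌈y⌉)) ha ha hr
    (fun x => ?_) (fun y => ?_)
  · exact (lintegral_comp_ceil_le_tsum _ t).trans_eq ((Equiv.subLeft ⌈x⌉).tsum_eq r)
  · exact (lintegral_comp_ceil_le_tsum _ s).trans_eq ((Equiv.subRight ⌈y⌉).tsum_eq r)

theorem stmt_18 (ρ : ℤ → ℝ)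
    (hρ0 : ρ 0 = 1) (hρnonneg : ∀ i : ℤ, 0 ≤ ρ i) (hρeven : ∀ i : ℤ, ρ (-i) = ρ i)
    (hρsum : Summable (fun i : ℕ => ρ (i : ℤ))) :
    ∃ C : ℝ, 0 < C ∧
      ∀ (σ : ℕ → ℝ) (w : ℝ → ℝ),
        (∀ i, 0 < σ i) →
        (∀ u : ℝ, 0 < u → 0 ≤ w u) →
        (∀ u : ℝ, 0 < u → (∫ x in (0:ℝ)..(w u), (σ (⌈x⌉.toNat)) ^ 2) = u ^ 2) →
        (∀ u v : ℝ, 0 < u → u ≤ v → w u ≤ w v) →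
        ∀ u : ℝ, 0 < u → ∀ b : ℝ, 1 ≤ b →
          (∫⁻ x in Ioo (w u) (w (b * u)), ∫⁻ y in Ioo (0:ℝ) (w (b * u)),
              ENNReal.ofReal (σ (⌈x⌉.toNat) * σ (⌈y⌉.toNat) * ρ (⌈x⌉ - ⌈y⌉)))
            ≤ ENNReal.ofReal (C * b * u ^ 2 * Real.sqrt (b ^ 2 - 1)) := by
  have hρZ : Summable ρ := .of_nat_of_neg hρsum (by simpa only [hρeven] using hρsum)
  refine ⟨∑' j, ρ j, (hρ0 ▸ one_pos).trans_le (hρZ.le_tsum 0 fun j _ => hρnonneg j), ?_⟩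
  intro σ w hσ hw₀ hw hw_mono u hu b hb
  have hbu : 0 < b * u := by positivity
  have hu_le : u ≤ b * u := le_mul_of_one_le_left hu.le hb
  have hσ_sq {c : ℝ} (hc : 0 ≤ c) (hc_le : c ≤ w (b * u)) :
      ∫⁻ x in Ioo c (w (b * u)), ENNReal.ofReal (σ ⌈x⌉.toNat) ^ 2 =
        ENNReal.ofReal ((b * u) ^ 2 - ∫ x in 0..c, σ ⌈x⌉.toNat ^ 2) := by
    have hσ_int : IntervalIntegrable (fun x => σ ⌈x⌉.toNat ^ 2) volume 0 (w (b * u)) :=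
      intervalIntegral.intervalIntegrable_of_integral_ne_zero (by rw [hw _ hbu]; positivity)
    simp only [← ENNReal.ofReal_pow (hσ _).le]
    rw [setLIntegral_Ioo_ofReal_eq_sub (fun x => sq_nonneg _) hc hc_le hσ_int, hw _ hbu]
  have hσ_outer : ∫⁻ x in Ioo (w u) (w (b * u)), ENNReal.ofReal (σ ⌈x⌉.toNat) ^ 2 =
      ENNReal.ofReal ((b * u) ^ 2 - u ^ 2) := by
    rw [hσ_sq (hw₀ u hu) (hw_mono _ _ hu hu_le), hw u hu]
  have hσ_inner : ∫⁻ y in Ioo 0 (w (b * u)), ENNReal.ofReal (σ ⌈y⌉.toNat) ^ 2 =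
      ENNReal.ofReal ((b * u) ^ 2) := by
    rw [hσ_sq le_rfl (hw₀ _ hbu), intervalIntegral.integral_same, sub_zero]
  have hsqrt : √((b * u) ^ 2 - u ^ 2) * √((b * u) ^ 2) = b * u ^ 2 * √(b ^ 2 - 1) := by
    rw [show (b * u) ^ 2 - u ^ 2 = u ^ 2 * (b ^ 2 - 1) by ring, Real.sqrt_mul (sq_nonneg u),
      Real.sqrt_sq hu.le, Real.sqrt_sq hbu.le]
    ring
  calc (∫⁻ x in Ioo (w u) (w (b * u)), ∫⁻ y in Ioo (0:ℝ) (w (b * u)),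
          ENNReal.ofReal (σ (⌈x⌉.toNat) * σ (⌈y⌉.toNat) * ρ (⌈x⌉ - ⌈y⌉)))
      = ∫⁻ x in Ioo (w u) (w (b * u)), ∫⁻ y in Ioo (0:ℝ) (w (b * u)),
          ENNReal.ofReal (σ ⌈x⌉.toNat) * ENNReal.ofReal (σ ⌈y⌉.toNat) *
            ENNReal.ofReal (ρ (⌈x⌉ - ⌈y⌉)) := by
        refine lintegral_congr fun x => lintegral_congr fun y => ?_
        rw [ENNReal.ofReal_mul (mul_nonneg (hσ _).le (hσ _).le), ENNReal.ofReal_mul (hσ _).le]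
    _ ≤ (∑' j, ENNReal.ofReal (ρ j)) * (ENNReal.ofReal ((b * u) ^ 2 - u ^ 2) ^ (1 / 2 : ℝ) *
          ENNReal.ofReal ((b * u) ^ 2) ^ (1 / 2 : ℝ)) := by
      rw [← hσ_outer, ← hσ_inner]
      exact setLIntegral_setLIntegral_ceil_le (fun k => ENNReal.ofReal (σ k.toNat))
        (fun j => ENNReal.ofReal (ρ j)) _ _
    _ = ENNReal.ofReal ((∑' j, ρ j) * b * u ^ 2 * √(b ^ 2 - 1)) := by
      rw [← ENNReal.ofReal_tsum_of_nonneg hρnonneg hρZ,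
        ENNReal.ofReal_rpow_of_nonneg (sub_nonneg.2 (pow_le_pow_left₀ hu.le hu_le 2)) (by norm_num),
        ENNReal.ofReal_rpow_of_nonneg (by positivity) (by norm_num),
        ← Real.sqrt_eq_rpow, ← Real.sqrt_eq_rpow, ← ENNReal.ofReal_mul (Real.sqrt_nonneg _),
        ← ENNReal.ofReal_mul (tsum_nonneg hρnonneg), hsqrt, mul_assoc, mul_assoc, mul_assoc]
end
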